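/- arXiv:1604.03711 — 3 statements merged into one kernel-verified Lean document; each statement's English description precedes it below -/
import Mathlib

section
/- Let μ be a measure of n-polynomial growth on ℝ^d and let B₁ ⊂ B₂ be balls with B₁ ⊂ B₂. Define K_{B₁,B₂} = 1 + Σ_{j=0}^{N} μ(2^j B₁)/r(2^j B₁)^n, where N is the smallest positive integer ℓ with B₂ ⊂ 2^ℓ B₁. Then K_{B₁,B₂} is comparable (with constants depending only on n and d) to 1 + ∫_{r(B₁) ≤ |y − x_{B₁}| ≤ r(B₂)} |y − x_{B₁}|^{-n} dμ(y), where x_{B₁} is the center of B₁ and r(B) denotes the radius of B. -/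
/-!
Write `θ(ρ) = μ(B(x₁, ρ)) / ρⁿ` and split `B(x₁, 2ᵐ r₁) \ B(x₁, r₁)` into the dyadic annuli
`Aᵢ = B(x₁, 2ⁱ⁺¹ r₁) \ B(x₁, 2ⁱ r₁)`, on which `|y - x₁|⁻ⁿ` lies between `(2ⁱ⁺¹ r₁)⁻ⁿ` and
`(2ⁱ r₁)⁻ⁿ`. Hence `∫_{Aᵢ} ≤ 2ⁿ θ(2ⁱ⁺¹ r₁)`, which bounds the integral by the sum, and
`θ(2ⁱ⁺¹ r₁) ≤ 2⁻ⁿ θ(2ⁱ r₁) + ∫_{Aᵢ}`, a recursion whose partial sums are at most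
`(1 - 2⁻ⁿ)⁻¹ (θ(r₁) + ∑ᵢ ∫_{Aᵢ})`. Comparing the radii: `B₂ ⊆ 2ᴺ B₁` forces `r₂ ≤ 2ᴺ r₁`, and
minimality of `N` forces `2ᴺ⁻² r₁ < r₂`, so only the last two terms of the sum escape the
integral, and these are at most `1` by the growth condition.
-/

open MeasureTheory Metric Set
open scoped ENNReal

lemma ENNReal.one_add_mul_inv_one_sub {q : ℝ≥0∞} (hq : q < 1) :
    1 + q * (1 - q)⁻¹ = (1 - q)⁻¹ := by
  have h₀ : 1 - q ≠ 0 := (tsub_pos_of_lt hq).ne'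
  have hTop : 1 - q ≠ ⊤ := ENNReal.sub_ne_top ENNReal.one_ne_top
  refine ENNReal.eq_inv_of_mul_eq_one_left ?_
  rw [add_mul, one_mul, mul_assoc, ENNReal.inv_mul_cancel h₀ hTop, mul_one,
    tsub_add_cancel_of_le hq.le]

theorem ENNReal.sum_range_succ_le_of_le_mul_add {q : ℝ≥0∞} (hq : q < 1) {θ a : ℕ → ℝ≥0∞}
    (h : ∀ j, θ (j + 1) ≤ q * θ j + a j) (m : ℕ) :
    ∑ j ∈ Finset.range (m + 1), θ j ≤ (1 - q)⁻¹ * (θ 0 + ∑ j ∈ Finset.range m, a j) := by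
  set G := (1 - q)⁻¹
  have hG : 1 + q * G = G := one_add_mul_inv_one_sub hq
  -- the extra term `q * G * θ m` makes the estimate inductive
  suffices key : ∀ m, ∑ j ∈ Finset.range (m + 1), θ j + q * G * θ m
      ≤ G * (θ 0 + ∑ j ∈ Finset.range m, a j) from le_self_add.trans (key m)
  intro m
  induction m with
  | zero =>
    simp only [zero_add, Finset.sum_range_one, Finset.range_zero, Finset.sum_empty, add_zero]
    conv_rhs => rw [← hG]
    rw [add_mul, one_mul, mul_assoc]
  | succ m ih =>
    calc ∑ j ∈ Finset.range (m + 2), θ j + q * G * θ (m + 1)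
        = ∑ j ∈ Finset.range (m + 1), θ j + G * θ (m + 1) := by
          conv_rhs => rw [← hG]
          rw [Finset.sum_range_succ]; ring
      _ ≤ ∑ j ∈ Finset.range (m + 1), θ j + G * (q * θ m + a m) := by gcongr; exact h m
      _ = (∑ j ∈ Finset.range (m + 1), θ j + q * G * θ m) + G * a m := by ring
      _ ≤ G * (θ 0 + ∑ j ∈ Finset.range m, a j) + G * a m := by gcongr
      _ = G * (θ 0 + ∑ j ∈ Finset.range (m + 1), a j) := by rw [Finset.sum_range_succ]; ring

lemma ENNReal.ofReal_two_mul_rpow_neg {ρ : ℝ} (hρ : 0 ≤ ρ) (n : ℝ) :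
    ENNReal.ofReal ((2 * ρ) ^ (-n)) = ENNReal.ofReal (2 ^ (-n)) * ENNReal.ofReal (ρ ^ (-n)) := by
  rw [Real.mul_rpow zero_le_two hρ, ENNReal.ofReal_mul (by positivity)]

lemma ENNReal.ofReal_two_rpow_mul_ofReal_two_rpow_neg (n : ℝ) :
    ENNReal.ofReal (2 ^ n) * ENNReal.ofReal (2 ^ (-n)) = 1 := by
  rw [← ENNReal.ofReal_mul (by positivity), ← Real.rpow_add zero_lt_two, add_neg_cancel,
    Real.rpow_zero, ENNReal.ofReal_one]

lemma ENNReal.ofReal_two_rpow_neg_lt_one {n : ℝ} (hn : 0 < n) : ENNReal.ofReal (2 ^ (-n)) < 1 := by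
  rw [ENNReal.ofReal_lt_one]
  exact Real.rpow_lt_one_of_one_lt_of_neg _root_.one_lt_two (neg_lt_zero.2 hn)

lemma lt_of_not_ball_subset_ball_two_mul {α : Type*} [PseudoMetricSpace α] {x y : α}
    {r ρ : ℝ} (hx : dist x y < r) (h : ¬ ball y r ⊆ ball x (2 * ρ)) : ρ < r := by
  obtain ⟨z, hzy, hzx⟩ := not_subset.1 h
  rw [mem_ball, not_lt] at hzx
  linarith [mem_ball.1 hzy, dist_triangle z y x, dist_comm x y]

lemma le_of_ball_subset_ball {E : Type*} [NormedAddCommGroup E] [NormedSpace ℝ E] [Nontrivial E]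
    {x y : E} {r R : ℝ} (hr : 0 ≤ r) (hR : 0 ≤ R) (h : ball x r ⊆ ball y R) : r ≤ R := by
  have := diam_mono h isBounded_ball
  rw [diam_ball_eq x hr, diam_ball_eq y hR] at this
  linarith

section Dyadic

variable {α : Type*} [PseudoMetricSpace α] {x : α} {r : ℝ}

lemma biUnion_range_ball_two_pow_diff (hr : 0 ≤ r) (m : ℕ) :
    ⋃ i ∈ Finset.range m, ball x (2 ^ (i + 1) * r) \ ball x (2 ^ i * r)
      = ball x (2 ^ m * r) \ ball x r := by
  induction m with
  | zero => simp
  | succ m ih =>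
    rw [Finset.range_add_one, Finset.set_biUnion_insert, ih]
    refine sdiff_union_sdiff_cancel (ball_subset_ball ?_) (ball_subset_ball ?_)
    · gcongr; exacts [one_le_two, m.le_succ]
    · exact le_mul_of_one_le_left hr (one_le_pow₀ one_le_two)

lemma pairwiseDisjoint_ball_two_pow_diff (hr : 0 ≤ r) (s : Set ℕ) :
    s.PairwiseDisjoint fun i ↦ ball x (2 ^ (i + 1) * r) \ ball x (2 ^ i * r) := by
  have key : ∀ i j : ℕ, i < j → Disjoint (ball x (2 ^ (i + 1) * r) \ ball x (2 ^ i * r))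
      (ball x (2 ^ (j + 1) * r) \ ball x (2 ^ j * r)) := fun i j hij ↦
    disjoint_sdiff_right.mono_left <| sdiff_subset.trans <| ball_subset_ball <| by
      gcongr; exacts [one_le_two, hij]
  intro i _ j _ hij
  rcases hij.lt_or_gt with h | h
  exacts [key i j h, (key j i h).symm]

lemma ball_two_pow_sub_two_diff_subset_annulus {x₁ x₂ : α} {r₁ r₂ : ℝ} {N : ℕ}
    (hx : dist x₁ x₂ < r₂)
    (hNleast : ∀ ℓ : ℕ, 0 < ℓ → ℓ < N → ¬ ball x₂ r₂ ⊆ ball x₁ (2 ^ ℓ * r₁)) :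
    ball x₁ (2 ^ (N - 2) * r₁) \ ball x₁ r₁ ⊆ {y | r₁ ≤ dist y x₁ ∧ dist y x₁ ≤ r₂} := by
  rintro y ⟨hy₂, hy₁⟩
  rw [mem_ball, not_lt] at hy₁
  rw [mem_ball] at hy₂
  refine ⟨hy₁, hy₂.le.trans ?_⟩
  rcases lt_or_ge N 2 with hN2 | hN2
  · rw [Nat.sub_eq_zero_of_le hN2.le, pow_zero, one_mul] at hy₂ ⊢
    linarith
  · refine (lt_of_not_ball_subset_ball_two_mul hx ?_).le
    convert hNleast (N - 1) (by omega) (by omega) using 3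
    rw [← mul_assoc, ← pow_succ']
    congr 2
    omega

end Dyadic

lemma annulus_subset_ball_two_pow_succ_diff {E : Type*} [NormedAddCommGroup E]
    [NormedSpace ℝ E] {x₁ x₂ : E} {r₁ r₂ : ℝ} {N : ℕ} (hr₁ : 0 < r₁) (hr₂ : 0 ≤ r₂)
    (hN : ball x₂ r₂ ⊆ ball x₁ (2 ^ N * r₁)) :
    {y | r₁ ≤ dist y x₁ ∧ dist y x₁ ≤ r₂} ⊆ ball x₁ (2 ^ (N + 1) * r₁) \ ball x₁ r₁ := by
  rintro y ⟨hy₁, hy₂⟩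
  have : Nontrivial E := nontrivial_of_ne y x₁ (dist_pos.1 (hr₁.trans_le hy₁))
  have hr₂N : r₂ ≤ 2 ^ N * r₁ := le_of_ball_subset_ball hr₂ (by positivity) hN
  refine ⟨mem_ball.2 ?_, fun h ↦ (mem_ball.1 h).not_ge hy₁⟩
  rw [pow_succ]
  nlinarith [pow_pos (two_pos : (0 : ℝ) < 2) N]

section DensityRatio

variable {α : Type*} [PseudoMetricSpace α] [MeasurableSpace α]
  {μ : Measure α} {x : α} {n ρ : ℝ}

noncomputable def densityRatio (μ : Measure α) (x : α) (n ρ : ℝ) : ℝ≥0∞ :=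
  μ (ball x ρ) / ENNReal.ofReal (ρ ^ n)

lemma densityRatio_eq_mul (hρ : 0 < ρ) :
    densityRatio μ x n ρ = ENNReal.ofReal (ρ ^ (-n)) * μ (ball x ρ) := by
  rw [densityRatio, ENNReal.div_eq_inv_mul, Real.rpow_neg hρ.le,
    ENNReal.ofReal_inv_of_pos (Real.rpow_pos_of_pos hρ n)]

lemma densityRatio_le_one (h : μ (ball x ρ) ≤ ENNReal.ofReal (ρ ^ n)) :
    densityRatio μ x n ρ ≤ 1 :=
  ENNReal.div_le_of_le_mul (by rwa [one_mul])

lemma setLIntegral_le_ofReal_rpow_neg_mul (hn : 0 ≤ n) (hρ : 0 < ρ) {R : ℝ} :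
    ∫⁻ y in ball x R \ ball x ρ, ENNReal.ofReal (dist y x ^ (-n)) ∂μ
      ≤ ENNReal.ofReal (ρ ^ (-n)) * μ (ball x R \ ball x ρ) := by
  rw [← setLIntegral_const]
  refine setLIntegral_mono measurable_const fun y ⟨_, hyρ⟩ ↦ ENNReal.ofReal_le_ofReal ?_
  rw [mem_ball, not_lt] at hyρ
  exact Real.rpow_le_rpow_of_nonpos hρ hyρ (neg_nonpos.2 hn)

lemma setLIntegral_ball_two_mul_diff_le (hn : 0 ≤ n) (hρ : 0 < ρ) :
    ∫⁻ y in ball x (2 * ρ) \ ball x ρ, ENNReal.ofReal (dist y x ^ (-n)) ∂μ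
      ≤ ENNReal.ofReal (2 ^ n) * densityRatio μ x n (2 * ρ) := by
  rw [densityRatio_eq_mul (by positivity), ENNReal.ofReal_two_mul_rpow_neg hρ.le,
    ← mul_assoc, ← mul_assoc, ENNReal.ofReal_two_rpow_mul_ofReal_two_rpow_neg, one_mul]
  exact (setLIntegral_le_ofReal_rpow_neg_mul hn hρ).trans (by gcongr; exact sdiff_subset)

variable [OpensMeasurableSpace α]

lemma ofReal_rpow_neg_mul_le_setLIntegral (hn : 0 ≤ n) (hρ : 0 < ρ) {R : ℝ} :
    ENNReal.ofReal (R ^ (-n)) * μ (ball x R \ ball x ρ)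
      ≤ ∫⁻ y in ball x R \ ball x ρ, ENNReal.ofReal (dist y x ^ (-n)) ∂μ := by
  rw [← setLIntegral_const]
  refine setLIntegral_mono (by fun_prop) fun y ⟨hyR, hyρ⟩ ↦ ENNReal.ofReal_le_ofReal ?_
  rw [mem_ball, not_lt] at hyρ
  exact Real.rpow_le_rpow_of_nonpos (hρ.trans_le hyρ) (mem_ball.1 hyR).le (neg_nonpos.2 hn)

lemma densityRatio_two_mul_le (hn : 0 ≤ n) (hρ : 0 < ρ) :
    densityRatio μ x n (2 * ρ) ≤ ENNReal.ofReal (2 ^ (-n)) * densityRatio μ x n ρ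
      + ∫⁻ y in ball x (2 * ρ) \ ball x ρ, ENNReal.ofReal (dist y x ^ (-n)) ∂μ := by
  have hsplit : ball x (2 * ρ) ⊆ ball x ρ ∪ ball x (2 * ρ) \ ball x ρ := by
    rw [union_sdiff_cancel (ball_subset_ball (by linarith))]
  calc densityRatio μ x n (2 * ρ) = ENNReal.ofReal ((2 * ρ) ^ (-n)) * μ (ball x (2 * ρ)) :=
        densityRatio_eq_mul (by positivity)
    _ ≤ ENNReal.ofReal ((2 * ρ) ^ (-n)) * (μ (ball x ρ) + μ (ball x (2 * ρ) \ ball x ρ)) := by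
        gcongr
        exact (measure_mono hsplit).trans (measure_union_le _ _)
    _ = ENNReal.ofReal (2 ^ (-n)) * (ENNReal.ofReal (ρ ^ (-n)) * μ (ball x ρ))
        + ENNReal.ofReal ((2 * ρ) ^ (-n)) * μ (ball x (2 * ρ) \ ball x ρ) := by
        rw [mul_add, ENNReal.ofReal_two_mul_rpow_neg hρ.le, mul_assoc]
    _ ≤ _ := by
        rw [densityRatio_eq_mul hρ]
        gcongr
        exact ofReal_rpow_neg_mul_le_setLIntegral hn hρ

lemma setLIntegral_ball_two_pow_diff_eq_sum {r : ℝ} (hr : 0 ≤ r) (f : α → ℝ≥0∞) (m : ℕ) :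
    ∫⁻ y in ball x (2 ^ m * r) \ ball x r, f y ∂μ
      = ∑ i ∈ Finset.range m, ∫⁻ y in ball x (2 ^ (i + 1) * r) \ ball x (2 ^ i * r), f y ∂μ := by
  rw [← biUnion_range_ball_two_pow_diff hr]
  exact lintegral_biUnion_finset (pairwiseDisjoint_ball_two_pow_diff hr _)
    (fun _ _ ↦ measurableSet_ball.diff measurableSet_ball) f

theorem sum_densityRatio_le (hn : 0 < n) {r : ℝ} (hr : 0 < r) (m : ℕ) :
    ∑ j ∈ Finset.range (m + 1), densityRatio μ x n (2 ^ j * r)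
      ≤ (1 - ENNReal.ofReal (2 ^ (-n)))⁻¹ * (densityRatio μ x n r
        + ∫⁻ y in ball x (2 ^ m * r) \ ball x r, ENNReal.ofReal (dist y x ^ (-n)) ∂μ) := by
  have hq := ENNReal.ofReal_two_rpow_neg_lt_one hn
  have step : ∀ j : ℕ, densityRatio μ x n (2 ^ (j + 1) * r)
      ≤ ENNReal.ofReal (2 ^ (-n)) * densityRatio μ x n (2 ^ j * r)
        + ∫⁻ y in ball x (2 ^ (j + 1) * r) \ ball x (2 ^ j * r),
            ENNReal.ofReal (dist y x ^ (-n)) ∂μ := fun j ↦ by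
    rw [pow_succ', mul_assoc]
    exact densityRatio_two_mul_le hn.le (by positivity)
  rw [setLIntegral_ball_two_pow_diff_eq_sum hr.le]
  simpa using ENNReal.sum_range_succ_le_of_le_mul_add hq step m

theorem setLIntegral_ball_two_pow_diff_le_sum (hn : 0 ≤ n) {r : ℝ} (hr : 0 < r)
    (m : ℕ) :
    ∫⁻ y in ball x (2 ^ m * r) \ ball x r, ENNReal.ofReal (dist y x ^ (-n)) ∂μ
      ≤ ENNReal.ofReal (2 ^ n) * ∑ j ∈ Finset.range m, densityRatio μ x n (2 ^ (j + 1) * r) := by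
  rw [setLIntegral_ball_two_pow_diff_eq_sum hr.le, Finset.mul_sum]
  refine Finset.sum_le_sum fun j _ ↦ ?_
  rw [pow_succ', mul_assoc]
  exact setLIntegral_ball_two_mul_diff_le hn (by positivity)

theorem one_add_sum_densityRatio_le {x₁ x₂ : α} {r₁ r₂ : ℝ} {N : ℕ}
    (hn : 0 < n) (hμ : ∀ ρ, 0 < ρ → μ (ball x₁ ρ) ≤ ENNReal.ofReal (ρ ^ n)) (hr₁ : 0 < r₁)
    (hx : dist x₁ x₂ < r₂)
    (hNleast : ∀ ℓ : ℕ, 0 < ℓ → ℓ < N → ¬ ball x₂ r₂ ⊆ ball x₁ (2 ^ ℓ * r₁)) :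
    1 + ∑ j ∈ Finset.range (N + 1), densityRatio μ x₁ n (2 ^ j * r₁)
      ≤ (3 + (1 - ENNReal.ofReal (2 ^ (-n)))⁻¹) * (1 +
          ∫⁻ y in {y | r₁ ≤ dist y x₁ ∧ dist y x₁ ≤ r₂}, ENNReal.ofReal (dist y x₁ ^ (-n)) ∂μ) := by
  set G := (1 - ENNReal.ofReal (2 ^ (-n)))⁻¹
  set I := ∫⁻ y in {y | r₁ ≤ dist y x₁ ∧ dist y x₁ ≤ r₂}, ENNReal.ofReal (dist y x₁ ^ (-n)) ∂μ
  have hθ (ρ : ℝ) (hρ : 0 < ρ) : densityRatio μ x₁ n ρ ≤ 1 := densityRatio_le_one (hμ ρ hρ)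
  have hhead : ∑ j ∈ Finset.range (N - 2 + 1), densityRatio μ x₁ n (2 ^ j * r₁) ≤ G * (1 + I) :=
    (sum_densityRatio_le hn hr₁ _).trans <| by
      gcongr
      exacts [hθ r₁ hr₁, lintegral_mono_set (ball_two_pow_sub_two_diff_subset_annulus hx hNleast)]
  have htail : ∑ j ∈ Finset.Ico (N - 2 + 1) (N + 1), densityRatio μ x₁ n (2 ^ j * r₁) ≤ 2 :=
    calc _ ≤ (Finset.Ico (N - 2 + 1) (N + 1)).card • (1 : ℝ≥0∞) :=
          Finset.sum_le_card_nsmul _ _ _ fun j _ ↦ hθ _ (by positivity)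
      _ ≤ 2 := by
          rw [Nat.card_Ico, nsmul_one]
          exact_mod_cast (by omega : N + 1 - (N - 2 + 1) ≤ 2)
  rw [← Finset.sum_range_add_sum_Ico _ (show N - 2 + 1 ≤ N + 1 by omega)]
  calc 1 + (_ + _) ≤ 1 + (G * (1 + I) + 2) := by gcongr
    _ = 3 * 1 + G * (1 + I) := by ring
    _ ≤ 3 * (1 + I) + G * (1 + I) := by gcongr; exact le_self_add
    _ = (3 + G) * (1 + I) := by ring

end DensityRatio

theorem one_add_lintegral_annulus_le {E : Type*} [NormedAddCommGroup E] [NormedSpace ℝ E]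
    [MeasurableSpace E] [OpensMeasurableSpace E] {μ : Measure E} {x₁ x₂ : E} {r₁ r₂ : ℝ}
    {n : ℝ} {N : ℕ} (hn : 0 ≤ n) (hμ : ∀ ρ, 0 < ρ → μ (ball x₁ ρ) ≤ ENNReal.ofReal (ρ ^ n))
    (hr₁ : 0 < r₁) (hr₂ : 0 ≤ r₂) (hN : ball x₂ r₂ ⊆ ball x₁ (2 ^ N * r₁)) :
    1 + ∫⁻ y in {y | r₁ ≤ dist y x₁ ∧ dist y x₁ ≤ r₂}, ENNReal.ofReal (dist y x₁ ^ (-n)) ∂μ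
      ≤ (1 + ENNReal.ofReal (2 ^ n))
        * (1 + ∑ j ∈ Finset.range (N + 1), densityRatio μ x₁ n (2 ^ j * r₁)) := by
  set K := ENNReal.ofReal (2 ^ n)
  set S := ∑ j ∈ Finset.range (N + 1), densityRatio μ x₁ n (2 ^ j * r₁)
  have hshift : ∑ j ∈ Finset.range (N + 1), densityRatio μ x₁ n (2 ^ (j + 1) * r₁) ≤ 1 + S :=
    calc _ ≤ ∑ j ∈ Finset.range (N + 2), densityRatio μ x₁ n (2 ^ j * r₁) := by
          rw [Finset.sum_range_succ' _ (N + 1)]; exact le_self_add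
      _ = S + densityRatio μ x₁ n (2 ^ (N + 1) * r₁) := Finset.sum_range_succ _ _
      _ ≤ 1 + S := by rw [add_comm 1]; gcongr; exact densityRatio_le_one (hμ _ (by positivity))
  calc 1 + ∫⁻ y in {y | r₁ ≤ dist y x₁ ∧ dist y x₁ ≤ r₂}, ENNReal.ofReal (dist y x₁ ^ (-n)) ∂μ
      ≤ 1 + ∫⁻ y in ball x₁ (2 ^ (N + 1) * r₁) \ ball x₁ r₁,
          ENNReal.ofReal (dist y x₁ ^ (-n)) ∂μ := by
        gcongr; exact annulus_subset_ball_two_pow_succ_diff hr₁ hr₂ hN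
    _ ≤ 1 + K * (1 + S) := by
        gcongr
        exact (setLIntegral_ball_two_pow_diff_le_sum hn hr₁ _).trans (by gcongr)
    _ ≤ (1 + K) * (1 + S) := by rw [add_mul, one_mul]; gcongr; exact le_add_right le_rfl

/-- For nested balls `B₁ ⊆ B₂` and a measure of `n`-polynomial growth,
the Tolsa coefficient `K_{B₁,B₂} = 1 + Σ_{j=0}^N μ(2^j B₁)/r(2^j B₁)^n` is comparable,
with constants depending only on `n` and `d`, to
`1 + ∫_{r(B₁) ≤ |y - x_{B₁}| ≤ r(B₂)} |y - x_{B₁}|^{-n} dμ(y)`. -/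
theorem statement4 (d : ℕ) (n : ℝ) (hn : 0 < n) :
    ∃ c C : ℝ≥0∞, 0 < c ∧ C ≠ ⊤ ∧
      ∀ (μ : Measure (EuclideanSpace ℝ (Fin d)))
        (_hgrowth : ∀ (z : EuclideanSpace ℝ (Fin d)) (ρ : ℝ), 0 < ρ →
          μ (ball z ρ) ≤ ENNReal.ofReal (ρ ^ n))
        (x₁ x₂ : EuclideanSpace ℝ (Fin d)) (r₁ r₂ : ℝ)
        (_hr₁ : 0 < r₁) (_hr₂ : 0 < r₂)
        (_hsub : ball x₁ r₁ ⊆ ball x₂ r₂)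
        (N : ℕ) (_hNpos : 0 < N)
        (_hN : ball x₂ r₂ ⊆ ball x₁ (2 ^ N * r₁))
        (_hNleast : ∀ ℓ : ℕ, 0 < ℓ → ℓ < N → ¬ ball x₂ r₂ ⊆ ball x₁ (2 ^ ℓ * r₁)),
        c * (1 + ∫⁻ y in {y | r₁ ≤ dist y x₁ ∧ dist y x₁ ≤ r₂},
              ENNReal.ofReal (dist y x₁ ^ (-n)) ∂μ) ≤
          1 + ∑ j ∈ Finset.range (N + 1),
              μ (ball x₁ (2 ^ j * r₁)) / ENNReal.ofReal ((2 ^ j * r₁) ^ n) ∧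
        1 + ∑ j ∈ Finset.range (N + 1),
              μ (ball x₁ (2 ^ j * r₁)) / ENNReal.ofReal ((2 ^ j * r₁) ^ n) ≤
          C * (1 + ∫⁻ y in {y | r₁ ≤ dist y x₁ ∧ dist y x₁ ≤ r₂},
              ENNReal.ofReal (dist y x₁ ^ (-n)) ∂μ) := by
  have hG : (1 - ENNReal.ofReal (2 ^ (-n)))⁻¹ ≠ ⊤ :=
    ENNReal.inv_ne_top.2 (tsub_pos_of_lt (ENNReal.ofReal_two_rpow_neg_lt_one hn)).ne'
  refine ⟨(1 + ENNReal.ofReal (2 ^ n))⁻¹, 3 + (1 - ENNReal.ofReal (2 ^ (-n)))⁻¹, by simp,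
    by simp [hG], fun μ hgrowth x₁ x₂ r₁ r₂ hr₁ hr₂ hsub N _ hN hNleast ↦ ⟨?_, ?_⟩⟩
  · rw [ENNReal.inv_mul_le_iff (by simp) (by simp)]
    exact one_add_lintegral_annulus_le hn.le (hgrowth x₁) hr₁ hr₂.le hN
  · exact one_add_sum_densityRatio_le hn (hgrowth x₁) hr₁ (hsub (mem_ball_self hr₁)) hNleast
end

section
/- Let μ be a measure on ℝ^d of n-polynomial growth and suppose there is a two-sided atomic filtration {Σ_k} of supp(μ) such that every atom Q admits a ball B_Q with B_Q ⊂ Q ⊂ 28B_Q, B_Q is (α,β)-doubling, and for every atom Q with parent Q̂ and x ∈ Q, ∫_{αB_{Q̂} \ 56B_Q} |x−y|^{-n} dμ(y) ≤ C₀. Then every f in Tolsa's RBMO(μ) satisfies ‖f‖_{RBMO_Σ(μ)} ≲ ‖f‖_{RBMO(μ)}, where ‖f‖_{RBMO_Σ(μ)} = sup over atoms Q of μ(Q)^{-1}∫_Q |f − ⟨f⟩_{Q̂}| dμ, i.e. RBMO(μ) ⊂ RBMO_Σ(μ). -/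
/-!
Let `B = B(c, r)` be the ball of an atom `Q` and `B' = B(c', r')` that of its parent `Q̂`.
As `50B ⊆ αB`, the ball `50B` is `(2,β)`-doubling and `μ(50B) ≤ β μ(Q)`, so
`⟨|f - ⟨f⟩_{50B}|⟩_Q ≤ β M` and it remains to compare `⟨f⟩_{50B}` with `⟨f⟩_{Q̂}`.
If `8r' ≤ 7r`, then `Q̂ ⊆ 50B` and the same argument applies. Otherwise `B ⊆ 50B'` and
`‖f‖_d ≤ M` bounds `|⟨f⟩_B - ⟨f⟩_{50B'}|` by `K_{B,50B'} M`, where `K_{B,50B'}` is bounded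
uniformly: all but eight of its terms `μ(2^j B)/(2^j r)^n` concern balls whose part outside
`64B` lies in `αB' \ 56B`. Cutting that part into dyadic annuli, on each of which
`|x - y|^{-n}` is comparable to `(2^ℓ r)^{-n}` for `x ∈ Q ∩ B`, a double geometric sum bounds
these terms by `(β + 4^n C₀) / (1 - 2^{-n})`, using the doubling of `B` and the regularity
condition (iv) of the filtration.
-/

open MeasureTheory Metric Set
open scoped ENNReal

/-- Average of `f` over a set `Q`. -/
noncomputable def localAvg {Ω : Type} [MeasurableSpace Ω] (μ : Measure Ω)
    (Q : Set Ω) (f : Ω → ℝ) : ℝ :=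
  (μ Q).toReal⁻¹ * ∫ x in Q, f x ∂μ

/-- The two-sided atomic filtration of Theorem A: atoms of every generation `k ∈ ℤ`
form (up to `μ`-null sets) a partition of `supp (μ)`, are nested, and every atom `Q`
carries an `(α,β)`-doubling ball `B_Q` with `B_Q ⊆ Q ⊆ 28 B_Q` (up to `μ`-null sets),
together with the weak regularity property (iv)
`∫_{α B_{Q̂} \ 56 B_Q} |x-y|^{-n} dμ(y) ≤ C₀` for all `x ∈ Q`. -/
structure DMFiltration (d : ℕ) (n α β C₀ : ℝ)
    (μ : Measure (EuclideanSpace ℝ (Fin d))) where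
  gen : ℤ → ℕ → Set (EuclideanSpace ℝ (Fin d))
  meas : ∀ k i, MeasurableSet (gen k i)
  pos : ∀ k i, 0 < μ (gen k i)
  fin : ∀ k i, μ (gen k i) < ⊤
  disj : ∀ k, Pairwise fun i j => Disjoint (gen k i) (gen k j)
  cover : ∀ k, μ (Set.univ \ ⋃ i, gen k i) = 0
  parentIdx : ℤ → ℕ → ℕ
  nested : ∀ k i, gen k i ⊆ gen (k - 1) (parentIdx k i)
  center : ℤ → ℕ → EuclideanSpace ℝ (Fin d)
  radius : ℤ → ℕ → ℝ
  rpos : ∀ k i, 0 < radius k i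
  ball_sub : ∀ k i, μ (ball (center k i) (radius k i) \ gen k i) = 0
  sub_ball : ∀ k i, gen k i ⊆ ball (center k i) (28 * radius k i)
  doubling : ∀ k i, μ (ball (center k i) (α * radius k i)) ≤
    ENNReal.ofReal β * μ (ball (center k i) (radius k i))
  reg : ∀ k i, ∀ x ∈ gen k i,
    ∫⁻ y in ball (center (k-1) (parentIdx k i)) (α * radius (k-1) (parentIdx k i)) \
        ball (center k i) (56 * radius k i),
      ENNReal.ofReal (dist x y ^ (-n)) ∂μ ≤ ENNReal.ofReal C₀

section MeanOscillation

variable {Ω : Type} [MeasurableSpace Ω] {μ : Measure Ω} {Z W : Set Ω} {f : Ω → ℝ}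
  {a b β M : ℝ}

noncomputable def meanOscillation (μ : Measure Ω) (Z : Set Ω) (f : Ω → ℝ) (a : ℝ) : ℝ :=
  (μ Z).toReal⁻¹ * ∫ y in Z, |f y - a| ∂μ

lemma meanOscillation_nonneg : 0 ≤ meanOscillation μ Z f a :=
  mul_nonneg (inv_nonneg.2 ENNReal.toReal_nonneg) (integral_nonneg fun _ => abs_nonneg _)

lemma abs_localAvg_sub_le_meanOscillation (hZ : 0 < μ Z) (hZ' : μ Z ≠ ∞)
    (hf : IntegrableOn f Z μ) : |localAvg μ Z f - a| ≤ meanOscillation μ Z f a := by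
  have hZpos : 0 < (μ Z).toReal := ENNReal.toReal_pos hZ.ne' hZ'
  have hsub : localAvg μ Z f - a = (μ Z).toReal⁻¹ * ∫ y in Z, (f y - a) ∂μ := by
    rw [integral_sub hf (integrableOn_const hZ'), setIntegral_const, measureReal_def,
      smul_eq_mul, localAvg]
    field_simp
  rw [hsub, abs_mul, abs_of_pos (inv_pos.2 hZpos)]
  exact mul_le_mul_of_nonneg_left (abs_integral_le_integral_abs) (inv_nonneg.2 hZpos.le)

lemma meanOscillation_le_add_abs_sub (hZ' : μ Z ≠ ∞) (hf : IntegrableOn f Z μ) :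
    meanOscillation μ Z f a ≤ meanOscillation μ Z f b + |b - a| := by
  have hfb : IntegrableOn (fun y => |f y - b|) Z μ := (hf.sub (integrableOn_const hZ')).abs
  have hint : ∫ y in Z, |f y - a| ∂μ ≤ ∫ y in Z, |f y - b| ∂μ + (μ Z).toReal * |b - a| := by
    rw [← smul_eq_mul, ← measureReal_def, ← setIntegral_const, ← integral_add hfb
      (integrableOn_const hZ')]
    exact integral_mono (hf.sub (integrableOn_const hZ')).abs (hfb.add (integrableOn_const hZ'))
      fun y => abs_sub_le (f y) b a
  calc meanOscillation μ Z f a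
      ≤ (μ Z).toReal⁻¹ * (∫ y in Z, |f y - b| ∂μ + (μ Z).toReal * |b - a|) :=
        mul_le_mul_of_nonneg_left hint (inv_nonneg.2 ENNReal.toReal_nonneg)
    _ = meanOscillation μ Z f b + ((μ Z).toReal⁻¹ * (μ Z).toReal) * |b - a| := by
        rw [meanOscillation]; ring
    _ ≤ meanOscillation μ Z f b + |b - a| := by
        have hle : (μ Z).toReal⁻¹ * (μ Z).toReal ≤ 1 := by
          rcases eq_or_ne (μ Z).toReal 0 with h | h <;> simp [h]
        grw [mul_le_of_le_one_left (abs_nonneg _) hle]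

lemma meanOscillation_le_of_subset (hZW : Z ⊆ W) (hZ : 0 < μ Z) (hW : μ W ≠ ∞) (hβ : 0 ≤ β)
    (hWZ : μ W ≤ ENNReal.ofReal β * μ Z) (hf : IntegrableOn f W μ)
    (hM : meanOscillation μ W f a ≤ M) : meanOscillation μ Z f a ≤ β * M := by
  have hZW' : (μ Z).toReal ≤ (μ W).toReal := ENNReal.toReal_mono hW (measure_mono hZW)
  have hZpos : 0 < (μ Z).toReal := ENNReal.toReal_pos hZ.ne' (ne_top_of_le_ne_top hW
    (measure_mono hZW))
  have hWβ : (μ W).toReal ≤ β * (μ Z).toReal := by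
    simpa [ENNReal.toReal_mul, ENNReal.toReal_ofReal hβ] using
      ENNReal.toReal_mono (ENNReal.mul_ne_top ENNReal.ofReal_ne_top
        (ne_top_of_le_ne_top hW (measure_mono hZW))) hWZ
  have hint : ∫ y in Z, |f y - a| ∂μ ≤ ∫ y in W, |f y - a| ∂μ :=
    setIntegral_mono_set (hf.sub (integrableOn_const hW)).abs
      (.of_forall fun _ => abs_nonneg _) hZW.eventuallyLE
  have hWM : ∫ y in W, |f y - a| ∂μ ≤ (μ W).toReal * M :=
    (inv_mul_le_iff₀ (hZpos.trans_le hZW')).1 hM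
  have hM0 : 0 ≤ M := meanOscillation_nonneg.trans hM
  rw [meanOscillation, inv_mul_le_iff₀ hZpos]
  calc ∫ y in Z, |f y - a| ∂μ ≤ (μ W).toReal * M := hint.trans hWM
    _ ≤ (β * (μ Z).toReal) * M := by gcongr
    _ = (μ Z).toReal * (β * M) := by ring

lemma abs_localAvg_sub_localAvg_le (hZW : Z ⊆ W) (hZ : 0 < μ Z) (hW : μ W ≠ ∞) (hβ : 0 ≤ β)
    (hWZ : μ W ≤ ENNReal.ofReal β * μ Z) (hf : IntegrableOn f W μ)
    (hM : meanOscillation μ W f (localAvg μ W f) ≤ M) :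
    |localAvg μ Z f - localAvg μ W f| ≤ β * M :=
  (abs_localAvg_sub_le_meanOscillation hZ (ne_top_of_le_ne_top hW (measure_mono hZW))
    (hf.mono_set hZW)).trans (meanOscillation_le_of_subset hZW hZ hW hβ hWZ hf hM)

end MeanOscillation

lemma sum_Icc_pow_mul_le {q A : ℝ} (hq0 : 0 ≤ q) (hq1 : q < 1) (hA : 0 ≤ A) {a u : ℕ → ℝ}
    (hu : ∀ ℓ, 0 ≤ u ℓ) {s t : ℕ} (ha : ∀ j ∈ Finset.Icc s t, a j ≤ A + ∑ ℓ ∈ Finset.Ico s j, u ℓ) :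
    ∑ j ∈ Finset.Icc s t, q ^ j * a j ≤ (1 - q)⁻¹ * (A + ∑ ℓ ∈ Finset.Ico s t, q ^ ℓ * u ℓ) := by
  have hG : 0 ≤ (1 - q)⁻¹ := inv_nonneg.2 (by linarith)
  have hgeom : ∀ m, ∑ j ∈ Finset.Ico m (t + 1), q ^ j ≤ (1 - q)⁻¹ * q ^ m := fun m => by
    simpa [div_eq_inv_mul] using geom_sum_Ico_le_of_lt_one (m := m) (n := t + 1) hq0 hq1
  have hswap : ∑ j ∈ Finset.Icc s t, ∑ ℓ ∈ Finset.Ico s j, q ^ j * u ℓ =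
      ∑ ℓ ∈ Finset.Ico s t, ∑ j ∈ Finset.Ico (ℓ + 1) (t + 1), q ^ j * u ℓ :=
    Finset.sum_comm' fun j ℓ => by simp only [Finset.mem_Icc, Finset.mem_Ico]; omega
  calc ∑ j ∈ Finset.Icc s t, q ^ j * a j
      ≤ ∑ j ∈ Finset.Icc s t, q ^ j * (A + ∑ ℓ ∈ Finset.Ico s j, u ℓ) :=
        Finset.sum_le_sum fun j hj => mul_le_mul_of_nonneg_left (ha j hj) (pow_nonneg hq0 j)
    _ = A * ∑ j ∈ Finset.Ico s (t + 1), q ^ j +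
          ∑ ℓ ∈ Finset.Ico s t, u ℓ * ∑ j ∈ Finset.Ico (ℓ + 1) (t + 1), q ^ j := by
        simp only [mul_add, Finset.sum_add_distrib, Finset.mul_sum, hswap]
        congr 1
        · rw [Finset.Ico_add_one_right_eq_Icc]
          exact Finset.sum_congr rfl fun j _ => mul_comm _ _
        · exact Finset.sum_congr rfl fun ℓ _ => Finset.sum_congr rfl fun j _ => mul_comm _ _
    _ ≤ A * ((1 - q)⁻¹ * 1) + ∑ ℓ ∈ Finset.Ico s t, u ℓ * ((1 - q)⁻¹ * q ^ ℓ) := by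
        gcongr with ℓ
        · exact (hgeom s).trans (mul_le_mul_of_nonneg_left (pow_le_one₀ hq0 hq1.le) hG)
        · exact hu ℓ
        · exact (hgeom (ℓ + 1)).trans
            (mul_le_mul_of_nonneg_left (pow_le_pow_of_le_one hq0 hq1.le (ℓ.le_succ)) hG)
    _ = (1 - q)⁻¹ * (A + ∑ ℓ ∈ Finset.Ico s t, q ^ ℓ * u ℓ) := by
        rw [mul_add, Finset.mul_sum]
        congr 1
        · ring
        · exact Finset.sum_congr rfl fun ℓ _ => by ring

lemma sum_range_le_add_sum_Icc {g : ℕ → ℝ} (hg1 : ∀ j, g j ≤ 1)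
    (s N : ℕ) : ∑ j ∈ Finset.range (N + 1), g j ≤ s + 2 + ∑ j ∈ Finset.Icc s (N - 2), g j := by
  have hsub : Finset.Icc s (N - 2) ⊆ Finset.range (N + 1) := fun j hj => by
    simp only [Finset.mem_Icc, Finset.mem_range] at hj ⊢
    omega
  have hcard : ((Finset.range (N + 1) \ Finset.Icc s (N - 2)).card : ℝ) ≤ s + 2 := by
    rw [Finset.card_sdiff_of_subset hsub, Finset.card_range, Nat.card_Icc]
    exact_mod_cast (by omega)
  rw [← Finset.sum_sdiff hsub]
  have := Finset.sum_le_card_nsmul _ _ 1 fun j (_ : j ∈ Finset.range (N + 1) \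
    Finset.Icc s (N - 2)) => hg1 j
  rw [nsmul_eq_mul, mul_one] at this
  linarith

lemma two_pow_mul_rpow_neg (n r : ℝ) (hr : 0 ≤ r) (j : ℕ) :
    ((2 : ℝ) ^ j * r) ^ (-n) = ((2 : ℝ) ^ (-n)) ^ j * r ^ (-n) := by
  rw [Real.mul_rpow (by positivity) hr, ← Real.rpow_natCast, ← Real.rpow_natCast,
    ← Real.rpow_mul (by norm_num), ← Real.rpow_mul (by norm_num), mul_comm (j : ℝ), mul_comm]

lemma two_rpow_neg_lt_one {n : ℝ} (hn : 0 < n) : (2 : ℝ) ^ (-n) < 1 :=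
  Real.rpow_lt_one_of_one_lt_of_neg one_lt_two (neg_lt_zero.2 hn)

/-- `β` comes from the doubling of `B`, `4^n C₀` from condition (iv), and `(1 - 2^{-n})⁻¹` from
summing a geometric series over the dyadic scales. -/
noncomputable def dyadicSumBound (n β C₀ : ℝ) : ℝ :=
  (1 - (2 : ℝ) ^ (-n))⁻¹ * (β + 4 ^ n * C₀)

lemma dyadicSumBound_nonneg {n β C₀ : ℝ} (hn : 0 < n) (hβ : 0 ≤ β) (hC₀ : 0 ≤ C₀) :
    0 ≤ dyadicSumBound n β C₀ :=
  mul_nonneg (inv_nonneg.2 (sub_nonneg.2 (two_rpow_neg_lt_one hn).le)) (by positivity)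

section DyadicAnnulus

variable {X : Type*} [PseudoMetricSpace X]

def dyadicAnnulus (c : X) (r : ℝ) (ℓ : ℕ) : Set X :=
  ball c (2 ^ (ℓ + 1) * r) \ ball c (2 ^ ℓ * r)

variable {c x : X} {r : ℝ}

lemma ball_two_pow_mono (hr : 0 ≤ r) {i j : ℕ} (hij : i ≤ j) :
    ball c (2 ^ i * r) ⊆ ball c (2 ^ j * r) :=
  ball_subset_ball (by gcongr; norm_num)

lemma pairwise_disjoint_dyadicAnnulus (hr : 0 ≤ r) :
    Pairwise (Function.onFun Disjoint (dyadicAnnulus c r)) := by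
  refine pairwise_disjoint_on _ |>.2 fun ℓ ℓ' h => disjoint_left.2 fun y hy hy' => hy'.2 ?_
  exact ball_two_pow_mono hr h hy.1

lemma dyadicAnnulus_subset (hr : 0 ≤ r) {s t ℓ : ℕ} (hℓ : ℓ ∈ Finset.Ico s t) :
    dyadicAnnulus c r ℓ ⊆ ball c (2 ^ t * r) \ ball c (2 ^ s * r) := by
  rw [Finset.mem_Ico] at hℓ
  exact sdiff_subset_sdiff (ball_two_pow_mono hr hℓ.2) (ball_two_pow_mono hr hℓ.1)

lemma measure_ball_two_pow_le [MeasurableSpace X] (μ : Measure X) (hr : 0 ≤ r) {s j : ℕ}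
    (hsj : s ≤ j) : μ (ball c (2 ^ j * r)) ≤
      μ (ball c (2 ^ s * r)) + ∑ ℓ ∈ Finset.Ico s j, μ (dyadicAnnulus c r ℓ) := by
  induction j, hsj using Nat.le_induction with
  | base => simp
  | succ j hsj ih =>
    calc μ (ball c (2 ^ (j + 1) * r))
        = μ (ball c (2 ^ j * r) ∪ dyadicAnnulus c r j) := by
          rw [dyadicAnnulus, union_sdiff_self, union_eq_right.2 (ball_two_pow_mono hr j.le_succ)]
      _ ≤ μ (ball c (2 ^ j * r)) + μ (dyadicAnnulus c r j) := measure_union_le _ _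
      _ ≤ _ := by
          rw [Finset.sum_Ico_succ_top hsj, ← add_assoc]
          gcongr

lemma measure_dyadicAnnulus_le [MeasurableSpace X] [OpensMeasurableSpace X] (μ : Measure X)
    {n : ℝ} (hn : 0 ≤ n) (hx : dist x c < r) (ℓ : ℕ) :
    ENNReal.ofReal ((2 ^ ℓ * r) ^ (-n)) * μ (dyadicAnnulus c r ℓ) ≤
      ENNReal.ofReal (4 ^ n) *
        ∫⁻ y in dyadicAnnulus c r ℓ, ENNReal.ofReal (dist x y ^ (-n)) ∂μ := by
  have hr : 0 < r := dist_nonneg.trans_lt hx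
  have hρ : 0 < 2 ^ ℓ * r := by positivity
  have hpt : ∀ y ∈ dyadicAnnulus c r ℓ, (4 * (2 ^ ℓ * r)) ^ (-n) ≤ dist x y ^ (-n) := by
    rintro y ⟨hy, hy'⟩
    rw [mem_ball] at hy
    rw [mem_ball, not_lt] at hy'
    have hxy := dist_triangle_left y c x
    have hyx := dist_triangle x c y
    have h1 : r ≤ 2 ^ ℓ * r := le_mul_of_one_le_left hr.le (one_le_pow₀ (by norm_num))
    rw [dist_comm c y] at hyx
    rw [pow_succ] at hy
    exact Real.rpow_le_rpow_of_nonpos (by linarith) (by linarith) (neg_nonpos.2 hn)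
  have hscale : (2 ^ ℓ * r) ^ (-n) = 4 ^ n * (4 * (2 ^ ℓ * r)) ^ (-n) := by
    rw [Real.mul_rpow (by norm_num) hρ.le, ← mul_assoc, ← Real.rpow_add (by norm_num),
      add_neg_cancel, Real.rpow_zero, one_mul]
  rw [hscale, ENNReal.ofReal_mul (by positivity), mul_assoc, ← setLIntegral_const]
  gcongr _ * ?_
  exact setLIntegral_mono' (measurableSet_ball.diff measurableSet_ball) fun y hy =>
    ENNReal.ofReal_le_ofReal (hpt y hy)

lemma sum_lintegral_dyadicAnnulus_le [MeasurableSpace X] [OpensMeasurableSpace X]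
    (μ : Measure X) (hr : 0 ≤ r) {s t : ℕ} {S : Set X}
    (hS : ball c (2 ^ t * r) \ ball c (2 ^ s * r) ⊆ S) (g : X → ℝ≥0∞) :
    ∑ ℓ ∈ Finset.Ico s t, ∫⁻ y in dyadicAnnulus c r ℓ, g y ∂μ ≤ ∫⁻ y in S, g y ∂μ := by
  rw [← lintegral_biUnion_finset ((pairwise_disjoint_dyadicAnnulus hr).set_pairwise _)
    fun _ _ => measurableSet_ball.diff measurableSet_ball]
  exact lintegral_mono_set (iUnion₂_subset fun ℓ hℓ => (dyadicAnnulus_subset hr hℓ).trans hS)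

lemma toReal_measure_ball_two_pow_le [MeasurableSpace X] (μ : Measure X) (hr : 0 ≤ r) {s j : ℕ}
    (hsj : s ≤ j) (hfin : μ (ball c (2 ^ j * r)) ≠ ∞) :
    (μ (ball c (2 ^ j * r))).toReal ≤
      (μ (ball c (2 ^ s * r))).toReal + ∑ ℓ ∈ Finset.Ico s j, (μ (dyadicAnnulus c r ℓ)).toReal := by
  have hs : μ (ball c (2 ^ s * r)) ≠ ∞ :=
    ne_top_of_le_ne_top hfin (measure_mono (ball_two_pow_mono hr hsj))
  have hann : ∀ ℓ ∈ Finset.Ico s j, μ (dyadicAnnulus c r ℓ) ≠ ∞ := fun ℓ hℓ =>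
    ne_top_of_le_ne_top hfin (measure_mono ((dyadicAnnulus_subset hr hℓ).trans sdiff_subset))
  have hsum : ∑ ℓ ∈ Finset.Ico s j, μ (dyadicAnnulus c r ℓ) ≠ ∞ := ENNReal.sum_ne_top.2 hann
  rw [← ENNReal.toReal_sum hann, ← ENNReal.toReal_add hs hsum]
  exact ENNReal.toReal_mono (ENNReal.add_ne_top.2 ⟨hs, hsum⟩) (measure_ball_two_pow_le μ hr hsj)

lemma sum_rpow_neg_mul_measure_dyadicAnnulus_le [MeasurableSpace X] [OpensMeasurableSpace X]
    (μ : Measure X) {n C₀ : ℝ} (hn : 0 ≤ n) (hC₀ : 0 ≤ C₀) (hx : dist x c < r) {s t : ℕ}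
    {S : Set X} (hS : ball c (2 ^ t * r) \ ball c (2 ^ s * r) ⊆ S)
    (hreg : ∫⁻ y in S, ENNReal.ofReal (dist x y ^ (-n)) ∂μ ≤ ENNReal.ofReal C₀) :
    ∑ ℓ ∈ Finset.Ico s t, (2 ^ ℓ * r) ^ (-n) * (μ (dyadicAnnulus c r ℓ)).toReal ≤ 4 ^ n * C₀ := by
  have hr : 0 ≤ r := dist_nonneg.trans hx.le
  have h : ∑ ℓ ∈ Finset.Ico s t, ENNReal.ofReal ((2 ^ ℓ * r) ^ (-n)) * μ (dyadicAnnulus c r ℓ)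
      ≤ ENNReal.ofReal (4 ^ n * C₀) :=
    calc _ ≤ ∑ ℓ ∈ Finset.Ico s t, ENNReal.ofReal (4 ^ n) *
            ∫⁻ y in dyadicAnnulus c r ℓ, ENNReal.ofReal (dist x y ^ (-n)) ∂μ :=
          Finset.sum_le_sum fun ℓ _ => measure_dyadicAnnulus_le μ hn hx ℓ
      _ ≤ ENNReal.ofReal (4 ^ n) * ENNReal.ofReal C₀ := by
          rw [← Finset.mul_sum]
          gcongr
          exact (sum_lintegral_dyadicAnnulus_le μ hr hS _).trans hreg
      _ = ENNReal.ofReal (4 ^ n * C₀) := (ENNReal.ofReal_mul (by positivity)).symm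
  have hfin : ∀ ℓ ∈ Finset.Ico s t,
      ENNReal.ofReal ((2 ^ ℓ * r) ^ (-n)) * μ (dyadicAnnulus c r ℓ) ≠ ∞ := fun ℓ hℓ =>
    ne_top_of_le_ne_top ENNReal.ofReal_ne_top
      ((Finset.single_le_sum (fun _ _ => zero_le) hℓ).trans h)
  have h' := ENNReal.toReal_mono ENNReal.ofReal_ne_top h
  rw [ENNReal.toReal_sum hfin, ENNReal.toReal_ofReal (by positivity)] at h'
  refine le_of_eq_of_le (Finset.sum_congr rfl fun ℓ _ => ?_) h'
  rw [ENNReal.toReal_mul, ENNReal.toReal_ofReal (by positivity)]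

lemma sum_Icc_measure_ball_div_rpow_le [MeasurableSpace X] [OpensMeasurableSpace X]
    (μ : Measure X) {n β C₀ : ℝ} (hn : 0 < n) (hβ : 0 ≤ β) (hC₀ : 0 ≤ C₀) (hx : dist x c < r)
    {s t : ℕ} (hfin : μ (ball c (2 ^ t * r)) ≠ ∞)
    (hbase : μ (ball c (2 ^ s * r)) ≤ ENNReal.ofReal (β * r ^ n))
    {S : Set X} (hS : ball c (2 ^ t * r) \ ball c (2 ^ s * r) ⊆ S)
    (hreg : ∫⁻ y in S, ENNReal.ofReal (dist x y ^ (-n)) ∂μ ≤ ENNReal.ofReal C₀) :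
    ∑ j ∈ Finset.Icc s t, (μ (ball c (2 ^ j * r))).toReal / (2 ^ j * r) ^ n ≤
      dyadicSumBound n β C₀ := by
  have hr : 0 < r := dist_nonneg.trans_lt hx
  set q : ℝ := (2 : ℝ) ^ (-n)
  set u : ℕ → ℝ := fun ℓ => (μ (dyadicAnnulus c r ℓ)).toReal
  have ha : ∀ j ∈ Finset.Icc s t,
      (μ (ball c (2 ^ j * r))).toReal ≤ β * r ^ n + ∑ ℓ ∈ Finset.Ico s j, u ℓ := by
    intro j hj
    rw [Finset.mem_Icc] at hj
    have hj_fin := ne_top_of_le_ne_top hfin (measure_mono (ball_two_pow_mono hr.le hj.2))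
    linarith [toReal_measure_ball_two_pow_le μ hr.le hj.1 hj_fin,
      ENNReal.toReal_le_of_le_ofReal (by positivity) hbase]
  calc ∑ j ∈ Finset.Icc s t, (μ (ball c (2 ^ j * r))).toReal / (2 ^ j * r) ^ n
      = r ^ (-n) * ∑ j ∈ Finset.Icc s t, q ^ j * (μ (ball c (2 ^ j * r))).toReal := by
        rw [Finset.mul_sum]
        refine Finset.sum_congr rfl fun j _ => ?_
        rw [div_eq_mul_inv, ← Real.rpow_neg (by positivity), two_pow_mul_rpow_neg n r hr.le]
        ring
    _ ≤ r ^ (-n) * ((1 - q)⁻¹ * (β * r ^ n + ∑ ℓ ∈ Finset.Ico s t, q ^ ℓ * u ℓ)) := by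
        gcongr
        exact sum_Icc_pow_mul_le (by positivity) (two_rpow_neg_lt_one hn) (by positivity)
          (fun ℓ => ENNReal.toReal_nonneg) ha
    _ = (1 - q)⁻¹ * (β + ∑ ℓ ∈ Finset.Ico s t, (2 ^ ℓ * r) ^ (-n) * u ℓ) := by
        simp only [two_pow_mul_rpow_neg n r hr.le, mul_add, Finset.mul_sum, Real.rpow_neg hr.le]
        field_simp
        rfl
    _ ≤ dyadicSumBound n β C₀ := by
        have := sum_rpow_neg_mul_measure_dyadicAnnulus_le μ hn.le hC₀ hx hS hreg
        unfold dyadicSumBound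
        gcongr
        exact inv_nonneg.2 (sub_nonneg.2 (two_rpow_neg_lt_one hn).le)

end DyadicAnnulus

lemma exists_min_two_pow_ball_superset {X : Type*} [PseudoMetricSpace X] (c c' : X) {r : ℝ}
    (hr : 0 < r) (r' : ℝ) :
    ∃ N : ℕ, 0 < N ∧ ball c' r' ⊆ ball c (2 ^ N * r) ∧
      ∀ ℓ : ℕ, 0 < ℓ → ℓ < N → ¬ ball c' r' ⊆ ball c (2 ^ ℓ * r) := by
  classical
  have hex : ∃ m : ℕ, 0 < m ∧ ball c' r' ⊆ ball c (2 ^ m * r) := by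
    obtain ⟨m, hm⟩ := pow_unbounded_of_one_lt ((r' + dist c' c) / r) one_lt_two
    refine ⟨m + 1, m.succ_pos, ball_subset_ball' ?_⟩
    rw [div_lt_iff₀ hr] at hm
    have : (2 : ℝ) ^ m * r ≤ 2 ^ (m + 1) * r := by gcongr <;> norm_num
    linarith
  obtain ⟨hN0, hNsub⟩ := Nat.find_spec hex
  exact ⟨Nat.find hex, hN0, hNsub, fun ℓ h0 hℓ h => Nat.find_min hex hℓ ⟨h0, h⟩⟩

lemma ball_two_pow_sdiff_subset {X : Type*} [PseudoMetricSpace X] {c c' : X} {r r' α : ℝ}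
    (hr : 0 < r) (hα : 100 ≤ α) (hcc : dist c c' < r + 28 * r') (hrr : 7 * r < 8 * r') {N : ℕ}
    (hN : ∀ ℓ : ℕ, 0 < ℓ → ℓ < N → ¬ ball c' (50 * r') ⊆ ball c (2 ^ ℓ * r)) :
    ball c (2 ^ (N - 2) * r) \ ball c (2 ^ 6 * r) ⊆ ball c' (α * r') \ ball c (56 * r) := by
  rcases lt_or_ge N 2 with hN2 | hN2
  · rw [Nat.sub_eq_zero_of_le hN2.le]
    exact fun z hz => absurd (ball_two_pow_mono hr.le (Nat.zero_le 6) hz.1) hz.2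
  -- a point of `50 B'` outside `2^(N-1) B` bounds the radius `2^(N-2) r` by `40 r'`
  obtain ⟨y, hy, hy'⟩ := not_subset.1 (hN (N - 1) (by omega) (by omega))
  rw [mem_ball] at hy
  rw [mem_ball, not_lt] at hy'
  have hpow : (2 : ℝ) ^ (N - 1) = 2 * 2 ^ (N - 2) := by
    rw [← pow_succ']
    congr 1
    omega
  have hyc := dist_triangle y c' c
  rw [dist_comm c' c] at hyc
  rw [hpow] at hy'
  have hαr : 100 * r' ≤ α * r' := mul_le_mul_of_nonneg_right hα (by linarith)
  rintro z ⟨hz, hz'⟩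
  rw [mem_ball] at hz
  rw [mem_ball, not_lt] at hz'
  refine ⟨mem_ball.2 ?_, fun h => ?_⟩
  · have hzc := dist_triangle z c c'
    linarith
  · rw [mem_ball] at h
    linarith

section RBMO

variable {X : Type} [PseudoMetricSpace X] [MeasurableSpace X]

def HasPolynomialGrowth (μ : Measure X) (n : ℝ) : Prop :=
  ∀ (z : X) (ρ : ℝ), 0 < ρ → μ (ball z ρ) ≤ ENNReal.ofReal (ρ ^ n)

def RBMOStarLE (μ : Measure X) (β : ℝ) (f : X → ℝ) (M : ℝ) : Prop :=
  ∀ (x : X) (r : ℝ), 0 < r → μ (ball x (2 * r)) ≤ ENNReal.ofReal β * μ (ball x r) →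
    meanOscillation μ (ball x r) f (localAvg μ (ball x r) f) ≤ M

/-- `N` is the least `ℓ ≥ 1` with `B₂ ⊆ 2^ℓ B₁`, so the factor of `M` is `K_{B₁,B₂}`. -/
def RBMODiffLE (μ : Measure X) (n β : ℝ) (f : X → ℝ) (M : ℝ) : Prop :=
  ∀ (x₁ x₂ : X) (r₁ r₂ : ℝ) (N : ℕ), 0 < r₁ → 0 < r₂ →
    μ (ball x₁ (2 * r₁)) ≤ ENNReal.ofReal β * μ (ball x₁ r₁) →
    μ (ball x₂ (2 * r₂)) ≤ ENNReal.ofReal β * μ (ball x₂ r₂) →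
    ball x₁ r₁ ⊆ ball x₂ r₂ → 0 < N → ball x₂ r₂ ⊆ ball x₁ (2 ^ N * r₁) →
    (∀ ℓ : ℕ, 0 < ℓ → ℓ < N → ¬ ball x₂ r₂ ⊆ ball x₁ (2 ^ ℓ * r₁)) →
    |localAvg μ (ball x₁ r₁) f - localAvg μ (ball x₂ r₂) f| ≤
      M * (1 + ∑ j ∈ Finset.range (N + 1), (μ (ball x₁ (2 ^ j * r₁))).toReal / ((2 ^ j * r₁) ^ n))

namespace HasPolynomialGrowth

variable {μ : Measure X} {n : ℝ}

lemma measure_ball_ne_top (h : HasPolynomialGrowth μ n) (z : X) (ρ : ℝ) : μ (ball z ρ) ≠ ∞ := by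
  rcases le_or_gt ρ 0 with hρ | hρ
  · simp [ball_eq_empty.2 hρ]
  · exact ne_top_of_le_ne_top ENNReal.ofReal_ne_top (h z ρ hρ)

lemma toReal_measure_ball_div_le_one (h : HasPolynomialGrowth μ n) (z : X) {ρ : ℝ}
    (hρ : 0 < ρ) : (μ (ball z ρ)).toReal / ρ ^ n ≤ 1 :=
  div_le_one_of_le₀ (ENNReal.toReal_le_of_le_ofReal (by positivity) (h z ρ hρ)) (by positivity)

end HasPolynomialGrowth

end RBMO

namespace DMFiltration

variable {d : ℕ} {n α β C₀ : ℝ} {μ : Measure (EuclideanSpace ℝ (Fin d))}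
  (F : DMFiltration d n α β C₀ μ) (k : ℤ) (i : ℕ)

lemma measure_ball_le_measure_gen : μ (ball (F.center k i) (F.radius k i)) ≤ μ (F.gen k i) :=
  (measure_le_inter_add_sdiff μ _ (F.gen k i)).trans <| by
    rw [F.ball_sub k i, add_zero]
    exact measure_mono inter_subset_right

lemma measure_ball_le_mul_measure_ball {s : ℝ} (hs : s ≤ α) :
    μ (ball (F.center k i) (s * F.radius k i)) ≤
      ENNReal.ofReal β * μ (ball (F.center k i) (F.radius k i)) :=
  (measure_mono (ball_subset_ball (by gcongr; exact (F.rpos k i).le))).trans (F.doubling k i)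

lemma measure_ball_le_mul_measure_gen {s : ℝ} (hs : s ≤ α) :
    μ (ball (F.center k i) (s * F.radius k i)) ≤ ENNReal.ofReal β * μ (F.gen k i) :=
  (F.measure_ball_le_mul_measure_ball k i hs).trans
    (mul_le_mul_right (F.measure_ball_le_measure_gen k i) _)

lemma measure_ball_pos (hα : 28 ≤ α) : 0 < μ (ball (F.center k i) (F.radius k i)) := by
  refine pos_iff_ne_zero.2 fun h0 => (F.pos k i).ne' (le_zero_iff.1 ?_)
  calc μ (F.gen k i) ≤ μ (ball (F.center k i) (28 * F.radius k i)) := measure_mono (F.sub_ball k i)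
    _ ≤ ENNReal.ofReal β * μ (ball (F.center k i) (F.radius k i)) :=
      F.measure_ball_le_mul_measure_ball k i hα
    _ = 0 := by rw [h0, mul_zero]

lemma ball_isDoubling {s : ℝ} (hs : 1 ≤ s) (hsα : 2 * s ≤ α) :
    μ (ball (F.center k i) (2 * (s * F.radius k i))) ≤
      ENNReal.ofReal β * μ (ball (F.center k i) (s * F.radius k i)) := by
  rw [← mul_assoc]
  refine (F.measure_ball_le_mul_measure_ball k i hsα).trans ?_
  exact mul_le_mul_right (measure_mono
    (ball_subset_ball (le_mul_of_one_le_left (F.rpos k i).le hs))) _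

lemma exists_mem_gen_dist_center_lt (hα : 28 ≤ α) :
    ∃ x ∈ F.gen k i, dist x (F.center k i) < F.radius k i := by
  have h := (F.measure_ball_pos k i hα).trans_le ((measure_le_inter_add_sdiff μ _ (F.gen k i)).trans
    (by rw [F.ball_sub k i, add_zero]))
  obtain ⟨x, hx, hxQ⟩ := nonempty_of_measure_ne_zero h.ne'
  exact ⟨x, hxQ, mem_ball.1 hx⟩

lemma dist_center_parent_lt (hα : 28 ≤ α) :
    dist (F.center k i) (F.center (k - 1) (F.parentIdx k i)) <
      F.radius k i + 28 * F.radius (k - 1) (F.parentIdx k i) := by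
  obtain ⟨x, hxQ, hx⟩ := F.exists_mem_gen_dist_center_lt k i hα
  have hxP := mem_ball.1 (F.sub_ball _ _ (F.nested k i hxQ))
  linarith [dist_triangle_left (F.center k i) (F.center (k - 1) (F.parentIdx k i)) x]

variable {f : EuclideanSpace ℝ (Fin d) → ℝ} {M : ℝ}

lemma meanOscillation_ball_le (hstar : RBMOStarLE μ β f M) {s : ℝ} (hs : 1 ≤ s)
    (hsα : 2 * s ≤ α) :
    meanOscillation μ (ball (F.center k i) (s * F.radius k i)) f
      (localAvg μ (ball (F.center k i) (s * F.radius k i)) f) ≤ M :=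
  hstar _ _ (mul_pos (by linarith) (F.rpos k i)) (F.ball_isDoubling k i hs hsα)

lemma abs_localAvg_ball_sub_localAvg_parent_ball_le (hn : 0 < n) (hα : 100 ≤ α) (hβ : 0 ≤ β)
    (hC₀ : 0 ≤ C₀) (hμ : HasPolynomialGrowth μ n) (hM : 0 ≤ M) (hd : RBMODiffLE μ n β f M)
    (hsmall : 7 * F.radius k i < 8 * F.radius (k - 1) (F.parentIdx k i)) :
    |localAvg μ (ball (F.center k i) (F.radius k i)) f -
        localAvg μ (ball (F.center (k - 1) (F.parentIdx k i))
          (50 * F.radius (k - 1) (F.parentIdx k i))) f| ≤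
      (9 + dyadicSumBound n β C₀) * M := by
  set c := F.center k i
  set r := F.radius k i
  set c' := F.center (k - 1) (F.parentIdx k i)
  set r' := F.radius (k - 1) (F.parentIdx k i)
  have hr : 0 < r := F.rpos k i
  have hr' : 0 < r' := F.rpos (k - 1) (F.parentIdx k i)
  obtain ⟨x, hxQ, hx⟩ := F.exists_mem_gen_dist_center_lt k i (by linarith)
  have hcc : dist c c' < r + 28 * r' := F.dist_center_parent_lt k i (by linarith)
  obtain ⟨N, hN0, hNsub, hNmin⟩ := exists_min_two_pow_ball_superset c c' hr (50 * r')
  have hbase : μ (ball c (2 ^ 6 * r)) ≤ ENNReal.ofReal (β * r ^ n) := by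
    rw [ENNReal.ofReal_mul hβ]
    exact (F.measure_ball_le_mul_measure_ball k i (by linarith)).trans
      (mul_le_mul_right (hμ c r hr) _)
  have hK : ∑ j ∈ Finset.range (N + 1),
      (μ (ball c (2 ^ j * r))).toReal / (2 ^ j * r) ^ n ≤
        8 + dyadicSumBound n β C₀ := by
    refine (sum_range_le_add_sum_Icc
      (fun j => hμ.toReal_measure_ball_div_le_one c (by positivity)) 6 _).trans ?_
    have := sum_Icc_measure_ball_div_rpow_le μ hn hβ hC₀ hx (hμ.measure_ball_ne_top _ _) hbase
      (ball_two_pow_sdiff_subset hr hα hcc hsmall hNmin) (F.reg k i x hxQ)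
    push_cast
    linarith
  have hchain := hd c c' r (50 * r') _ hr (by positivity)
    (by simpa using F.ball_isDoubling k i le_rfl (by linarith))
    (F.ball_isDoubling (k - 1) _ (by norm_num) (by linarith))
    (ball_subset_ball' (by linarith)) hN0 hNsub hNmin
  nlinarith

lemma abs_localAvg_ball_sub_localAvg_parent_le_of_le (hα : 100 ≤ α) (hβ : 0 ≤ β)
    (hμ : HasPolynomialGrowth μ n) (hf : ∀ s, Bornology.IsBounded s → IntegrableOn f s μ)
    (hstar : RBMOStarLE μ β f M)
    (hlarge : 8 * F.radius (k - 1) (F.parentIdx k i) ≤ 7 * F.radius k i) :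
    |localAvg μ (ball (F.center k i) (50 * F.radius k i)) f -
        localAvg μ (F.gen (k - 1) (F.parentIdx k i)) f| ≤ β * M := by
  have hcc := F.dist_center_parent_lt k i (by linarith)
  rw [dist_comm] at hcc
  have hPB : F.gen (k - 1) (F.parentIdx k i) ⊆ ball (F.center k i) (50 * F.radius k i) :=
    (F.sub_ball _ _).trans (ball_subset_ball' (by linarith [F.rpos k i]))
  rw [abs_sub_comm]
  exact abs_localAvg_sub_localAvg_le hPB (F.pos _ _) (hμ.measure_ball_ne_top _ _) hβ
    ((F.measure_ball_le_mul_measure_gen k i (by linarith)).trans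
      (mul_le_mul_right (measure_mono (F.nested k i)) _))
    (hf _ isBounded_ball) (F.meanOscillation_ball_le k i hstar (by norm_num) (by linarith))

lemma abs_localAvg_ball_sub_localAvg_parent_le (hn : 0 < n) (hα : 100 ≤ α) (hβ : 0 ≤ β)
    (hC₀ : 0 ≤ C₀) (hμ : HasPolynomialGrowth μ n) (hM : 0 ≤ M)
    (hf : ∀ s, Bornology.IsBounded s → IntegrableOn f s μ) (hstar : RBMOStarLE μ β f M)
    (hd : RBMODiffLE μ n β f M) :
    |localAvg μ (ball (F.center k i) (50 * F.radius k i)) f -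
        localAvg μ (F.gen (k - 1) (F.parentIdx k i)) f| ≤
      (2 * β + 9 + dyadicSumBound n β C₀) * M := by
  have hG := dyadicSumBound_nonneg hn hβ hC₀
  rcases le_or_gt (8 * F.radius (k - 1) (F.parentIdx k i)) (7 * F.radius k i) with hlarge | hsmall
  · have := F.abs_localAvg_ball_sub_localAvg_parent_le_of_le k i hα hβ hμ hf hstar hlarge
    nlinarith
  set c := F.center k i
  set r := F.radius k i
  set p := F.parentIdx k i
  set c' := F.center (k - 1) p
  set r' := F.radius (k - 1) p
  set P := F.gen (k - 1) p
  have hball : |localAvg μ (ball c (50 * r)) f - localAvg μ (ball c r) f| ≤ β * M := by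
    rw [abs_sub_comm]
    exact abs_localAvg_sub_localAvg_le (ball_subset_ball (by linarith [F.rpos k i]))
      (F.measure_ball_pos k i (by linarith)) (hμ.measure_ball_ne_top _ _) hβ
      (F.measure_ball_le_mul_measure_ball k i (by linarith)) (hf _ isBounded_ball)
      (F.meanOscillation_ball_le k i hstar (by norm_num) (by linarith))
  have hparent : |localAvg μ (ball c' (50 * r')) f - localAvg μ P f| ≤ β * M := by
    rw [abs_sub_comm]
    exact abs_localAvg_sub_localAvg_le
      ((F.sub_ball (k - 1) p).trans (ball_subset_ball (by linarith [F.rpos (k - 1) p])))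
      (F.pos (k - 1) p) (hμ.measure_ball_ne_top _ _) hβ
      (F.measure_ball_le_mul_measure_gen (k - 1) p (by linarith)) (hf _ isBounded_ball)
      (F.meanOscillation_ball_le (k - 1) p hstar (by norm_num) (by linarith))
  have hchain := F.abs_localAvg_ball_sub_localAvg_parent_ball_le k i hn hα hβ hC₀ hμ hM hd hsmall
  linarith [abs_sub_le (localAvg μ (ball c (50 * r)) f) (localAvg μ (ball c r) f)
      (localAvg μ P f),
    abs_sub_le (localAvg μ (ball c r) f) (localAvg μ (ball c' (50 * r')) f) (localAvg μ P f)]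

end DMFiltration

/-- `RBMO(μ) ⊆ RBMO_Σ(μ)`: if `‖f‖_{RBMO(μ)} ≤ M` (i.e. the Tolsa
quantities `‖f‖_*` over `(2,β)`-doubling balls and `‖f‖_d` over nested `(2,β)`-doubling
balls are `≤ M`), then `sup_Q ⟨|f - ⟨f⟩_{Q̂}|⟩_Q ≤ C · M` for a constant `C`
depending only on the structural parameters. -/
theorem statement8 (d : ℕ) (n α β C₀ : ℝ) (hn : 0 < n) (hα : 100 ≤ α)
    (hβ : 1 < β) (hC₀ : 0 ≤ C₀) :
    ∃ C : ℝ, 0 < C ∧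
      ∀ (μ : Measure (EuclideanSpace ℝ (Fin d)))
        (_hgrowth : ∀ (z : EuclideanSpace ℝ (Fin d)) (ρ : ℝ), 0 < ρ →
          μ (ball z ρ) ≤ ENNReal.ofReal (ρ ^ n))
        (F : DMFiltration d n α β C₀ μ)
        (f : EuclideanSpace ℝ (Fin d) → ℝ)
        (_hf : ∀ s : Set (EuclideanSpace ℝ (Fin d)), Bornology.IsBounded s →
          IntegrableOn f s μ)
        (M : ℝ) (_hM : 0 ≤ M)
        -- `‖f‖_* ≤ M` : oscillation control on `(2,β)`-doubling balls
        (_hstar : ∀ (x : EuclideanSpace ℝ (Fin d)) (r : ℝ), 0 < r →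
          μ (ball x (2 * r)) ≤ ENNReal.ofReal β * μ (ball x r) →
          (μ (ball x r)).toReal⁻¹ *
              ∫ y in ball x r, |f y - localAvg μ (ball x r) f| ∂μ ≤ M)
        -- `‖f‖_d ≤ M` : control of differences of averages over nested doubling balls
        (_hd : ∀ (x₁ x₂ : EuclideanSpace ℝ (Fin d)) (r₁ r₂ : ℝ) (N : ℕ),
          0 < r₁ → 0 < r₂ →
          μ (ball x₁ (2 * r₁)) ≤ ENNReal.ofReal β * μ (ball x₁ r₁) →
          μ (ball x₂ (2 * r₂)) ≤ ENNReal.ofReal β * μ (ball x₂ r₂) →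
          ball x₁ r₁ ⊆ ball x₂ r₂ → 0 < N →
          ball x₂ r₂ ⊆ ball x₁ (2 ^ N * r₁) →
          (∀ ℓ : ℕ, 0 < ℓ → ℓ < N → ¬ ball x₂ r₂ ⊆ ball x₁ (2 ^ ℓ * r₁)) →
          |localAvg μ (ball x₁ r₁) f - localAvg μ (ball x₂ r₂) f| ≤
            M * (1 + ∑ j ∈ Finset.range (N + 1),
              (μ (ball x₁ (2 ^ j * r₁))).toReal / ((2 ^ j * r₁) ^ n))),
        ∀ (k : ℤ) (i : ℕ),
          (μ (F.gen k i)).toReal⁻¹ *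
              ∫ x in F.gen k i,
                |f x - localAvg μ (F.gen (k-1) (F.parentIdx k i)) f| ∂μ ≤ C * M := by
  have hβ0 : 0 ≤ β := by linarith
  refine ⟨3 * β + 9 + dyadicSumBound n β C₀, by linarith [dyadicSumBound_nonneg hn hβ0 hC₀], ?_⟩
  intro μ hμ F f hf M hM hstar hd k i
  set c := F.center k i
  set r := F.radius k i
  set P := F.gen (k - 1) (F.parentIdx k i)
  have hQ : meanOscillation μ (F.gen k i) f (localAvg μ (ball c (50 * r)) f) ≤ β * M :=
    meanOscillation_le_of_subset
      ((F.sub_ball k i).trans (ball_subset_ball (by linarith [F.rpos k i]))) (F.pos k i)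
      (HasPolynomialGrowth.measure_ball_ne_top hμ _ _) hβ0
      (F.measure_ball_le_mul_measure_gen k i (by linarith)) (hf _ isBounded_ball)
      (F.meanOscillation_ball_le k i hstar (by norm_num) (by linarith))
  have hQP := F.abs_localAvg_ball_sub_localAvg_parent_le k i hn hα hβ0 hC₀ hμ hM hf hstar hd
  calc meanOscillation μ (F.gen k i) f (localAvg μ P f)
      ≤ meanOscillation μ (F.gen k i) f (localAvg μ (ball c (50 * r)) f) +
          |localAvg μ (ball c (50 * r)) f - localAvg μ P f| :=
        meanOscillation_le_add_abs_sub (F.fin k i).ne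
          ((hf _ isBounded_ball).mono_set (F.sub_ball k i))
    _ ≤ β * M + (2 * β + 9 + dyadicSumBound n β C₀) * M := add_le_add hQ hQP
    _ = (3 * β + 9 + dyadicSumBound n β C₀) * M := by ring
end

section
/- Maximal function weighted bound with two iterated dyadic maximal functions: let ν be a Borel measure and 𝒟 a dyadic system; the dyadic maximal operator M^ν_𝒟 f(x) = sup_{x∈Q∈𝒟} ν(Q)^{-1}∫_Q |f| dν is bounded on L₂(ν) with norm at most 2 (independent of ν). Consequently, if w > 0 a.e. with [w]_{A₂} = sup_{Q∈𝒟}(w(Q)/μ(Q))(w^{-1}(Q)/μ(Q)) < ∞, then the operator f ↦ M^{w dμ}_𝒟( M^{w^{-1}dμ}_𝒟(|f| w) · w^{-1} ) is bounded on L₂(w dμ) with norm ≤ 4, and hence any operator N satisfying the pointwise bound N f(x) ≤ [w]_{A₂} · M^{wdμ}_𝒟(M^{w^{-1}dμ}_𝒟(|f|w)w^{-1})(x) satisfies ‖N‖_{L₂(wdμ)→L₂(wdμ)} ≤ 4[w]_{A₂}. -/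
/-!
For a laminar family, the level set `{M f > t}` is the union of the sets on which `f` has
average `> t`. On a finite subfamily the maximal members are disjoint and cover this union,
which gives the weak-type bound `t ν {M f > t} ≤ ∫_{M f > t} f dν`, and continuity from below
passes to the countable family. Integrating in `t` by the layer-cake formula gives
`∫ (M f)² ≤ 2 ∫ f · M f`, and the AM–GM inequality `4 f · M f ≤ (M f)² + 4 f²` turns this into
`∫ (M f)² ≤ 4 ∫ f²` once `∫ (M f)²` is known to be finite. That is the case for the maximal
function of the first `n` sets, and monotone convergence removes the truncation.

The weighted bound is the unweighted one applied twice, to `w⁻¹ dμ` and to `w dμ`, glued by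
`∫ (g w⁻¹)² w dμ = ∫ g² w⁻¹ dμ`.
-/

open MeasureTheory Set
open scoped ENNReal

/-- The dyadic maximal operator associated with a countable nested family `D` of
measurable sets, relative to the measure `ν`. -/
noncomputable def dyadicMaximal {E : Type} [MeasurableSpace E]
    (D : ℕ → Set E) (ν : Measure E) (f : E → ℝ≥0∞) (x : E) : ℝ≥0∞ :=
  ⨆ (i : ℕ) (_ : x ∈ D i), (ν (D i))⁻¹ * ∫⁻ y in D i, f y ∂ν

section Lintegral

variable {α : Type*} [MeasurableSpace α] {μ : Measure α} {f g : α → ℝ≥0∞}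

lemma measure_lt_toReal_eq_measure_ofReal_lt (hfin : ∀ᵐ x ∂μ, g x ≠ ∞) {t : ℝ} (ht : 0 ≤ t) :
    μ {x | t < (g x).toReal} = μ {x | ENNReal.ofReal t < g x} := by
  refine measure_congr (Filter.eventuallyEq_set.mpr ?_)
  filter_upwards [hfin] with x hx
  exact (ENNReal.ofReal_lt_iff_lt_toReal ht hx).symm

lemma lintegral_eq_lintegral_meas_ofReal_lt (hg : AEMeasurable g μ) (hfin : ∀ᵐ x ∂μ, g x ≠ ∞) :
    ∫⁻ x, g x ∂μ = ∫⁻ t in Ioi 0, μ {x | ENNReal.ofReal t < g x} := by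
  have := lintegral_eq_lintegral_meas_lt μ (ae_of_all _ fun x => ENNReal.toReal_nonneg)
    hg.ennreal_toReal
  rw [lintegral_congr_ae (hfin.mono fun x hx => (ENNReal.ofReal_toReal hx).symm), this]
  exact setLIntegral_congr_fun measurableSet_Ioi fun t ht =>
    measure_lt_toReal_eq_measure_ofReal_lt hfin ht.le

lemma lintegral_sq_eq_lintegral_meas_ofReal_lt (hg : AEMeasurable g μ)
    (hfin : ∀ᵐ x ∂μ, g x ≠ ∞) :
    ∫⁻ x, g x ^ 2 ∂μ = 2 * ∫⁻ t in Ioi 0, μ {x | ENNReal.ofReal t < g x} * ENNReal.ofReal t := by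
  have := lintegral_rpow_eq_lintegral_meas_lt_mul μ
    (ae_of_all _ fun x => ENNReal.toReal_nonneg) hg.ennreal_toReal two_pos
  rw [lintegral_congr_ae (hfin.mono fun x hx => ?_), this, ENNReal.ofReal_ofNat]
  · congr 1
    refine setLIntegral_congr_fun measurableSet_Ioi fun t ht => ?_
    rw [measure_lt_toReal_eq_measure_ofReal_lt hfin (le_of_lt ht)]
    norm_num
  · rw [Real.rpow_two, ENNReal.ofReal_pow ENNReal.toReal_nonneg, ENNReal.ofReal_toReal hx]

lemma lintegral_sq_le_two_mul_lintegral_mul (hf : Measurable f) (hg : Measurable g)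
    (hfin : ∀ᵐ x ∂μ, g x ≠ ∞)
    (hweak : ∀ t, t * μ {x | t < g x} ≤ ∫⁻ x in {x | t < g x}, f x ∂μ) :
    ∫⁻ x, g x ^ 2 ∂μ ≤ 2 * ∫⁻ x, f x * g x ∂μ := by
  have hfin' : ∀ᵐ x ∂μ.withDensity f, g x ≠ ∞ := withDensity_absolutelyContinuous μ f hfin
  calc ∫⁻ x, g x ^ 2 ∂μ
      = 2 * ∫⁻ t in Ioi 0, μ {x | ENNReal.ofReal t < g x} * ENNReal.ofReal t :=
        lintegral_sq_eq_lintegral_meas_ofReal_lt hg.aemeasurable hfin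
    _ ≤ 2 * ∫⁻ t in Ioi 0, μ.withDensity f {x | ENNReal.ofReal t < g x} := by
        gcongr with t
        rw [mul_comm, withDensity_apply _ (measurableSet_lt measurable_const hg)]
        exact hweak _
    _ = 2 * ∫⁻ x, f x * g x ∂μ := by
        rw [← lintegral_eq_lintegral_meas_ofReal_lt hg.aemeasurable hfin',
          lintegral_withDensity_eq_lintegral_mul μ hf hg]
        rfl

lemma four_mul_mul_le_sq_add_four_mul_sq (a b : ℝ≥0∞) : 4 * (a * b) ≤ b ^ 2 + 4 * a ^ 2 := by
  rcases eq_or_ne a ∞ with rfl | ha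
  · simp
  rcases eq_or_ne b ∞ with rfl | hb
  · simp
  lift a to NNReal using ha
  lift b to NNReal using hb
  norm_cast
  rw [← NNReal.coe_le_coe]
  push_cast
  nlinarith [sq_nonneg ((b : ℝ) - 2 * a)]

theorem lintegral_sq_le_four_mul_of_weakType (hf : Measurable f) (hg : Measurable g)
    (hfin : ∫⁻ x, g x ^ 2 ∂μ ≠ ∞)
    (hweak : ∀ t, t * μ {x | t < g x} ≤ ∫⁻ x in {x | t < g x}, f x ∂μ) :
    ∫⁻ x, g x ^ 2 ∂μ ≤ 4 * ∫⁻ x, f x ^ 2 ∂μ := by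
  have hg_fin : ∀ᵐ x ∂μ, g x ≠ ∞ := by
    filter_upwards [ae_lt_top (hg.pow_const 2) hfin] with x hx
    exact fun h => by simp [h] at hx
  refine ENNReal.le_of_add_le_add_left hfin ?_
  calc ∫⁻ x, g x ^ 2 ∂μ + ∫⁻ x, g x ^ 2 ∂μ
      = 2 * ∫⁻ x, g x ^ 2 ∂μ := (two_mul _).symm
    _ ≤ 2 * (2 * ∫⁻ x, f x * g x ∂μ) := by
        gcongr; exact lintegral_sq_le_two_mul_lintegral_mul hf hg hg_fin hweak
    _ = ∫⁻ x, 4 * (f x * g x) ∂μ := by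
        rw [lintegral_const_mul (f := fun x => f x * g x) _ (hf.mul hg), ← mul_assoc]
        norm_num
    _ ≤ ∫⁻ x, (g x ^ 2 + 4 * f x ^ 2) ∂μ :=
        lintegral_mono fun x => four_mul_mul_le_sq_add_four_mul_sq _ _
    _ = ∫⁻ x, g x ^ 2 ∂μ + 4 * ∫⁻ x, f x ^ 2 ∂μ := by
        rw [lintegral_add_left (hg.pow_const 2), lintegral_const_mul _ (hf.pow_const 2)]

lemma sq_lintegral_le_measure_univ_mul (hf : AEMeasurable f μ) :
    (∫⁻ x, f x ∂μ) ^ 2 ≤ μ univ * ∫⁻ x, f x ^ 2 ∂μ := by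
  have hCS := ENNReal.lintegral_mul_le_Lp_mul_Lq μ Real.HolderConjugate.two_two hf
    (aemeasurable_const (b := (1 : ℝ≥0∞)))
  simp only [Pi.mul_apply, mul_one, ENNReal.rpow_two, one_pow, lintegral_const, one_mul] at hCS
  have hsq (a : ℝ≥0∞) : (a ^ (1 / 2 : ℝ)) ^ 2 = a := by
    rw [← ENNReal.rpow_natCast, ← ENNReal.rpow_mul]; norm_num
  calc (∫⁻ x, f x ∂μ) ^ 2
      ≤ ((∫⁻ x, f x ^ 2 ∂μ) ^ (1 / 2 : ℝ) * μ univ ^ (1 / 2 : ℝ)) ^ 2 := by gcongr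
    _ = μ univ * ∫⁻ x, f x ^ 2 ∂μ := by rw [mul_pow, hsq, hsq, mul_comm]

lemma sq_setAverage_mul_measure_le (s : Set α) (hf : AEMeasurable f μ) :
    ((μ s)⁻¹ * ∫⁻ x in s, f x ∂μ) ^ 2 * μ s ≤ ∫⁻ x in s, f x ^ 2 ∂μ :=
  calc ((μ s)⁻¹ * ∫⁻ x in s, f x ∂μ) ^ 2 * μ s
      = (μ s)⁻¹ ^ 2 * (∫⁻ x in s, f x ∂μ) ^ 2 * μ s := by ring
    _ ≤ (μ s)⁻¹ ^ 2 * (μ s * ∫⁻ x in s, f x ^ 2 ∂μ) * μ s := by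
        gcongr
        simpa using sq_lintegral_le_measure_univ_mul hf.restrict (μ := μ.restrict s)
    _ = ((μ s)⁻¹ * μ s) ^ 2 * ∫⁻ x in s, f x ^ 2 ∂μ := by ring
    _ ≤ ∫⁻ x in s, f x ^ 2 ∂μ :=
        mul_le_of_le_one_left' (pow_le_one₀ zero_le (ENNReal.inv_mul_le_one _))

end Lintegral

def Laminar {ι E : Type*} (D : ι → Set E) : Prop :=
  ∀ i j, D i ⊆ D j ∨ D j ⊆ D i ∨ Disjoint (D i) (D j)

lemma Laminar.comp {ι κ E : Type*} {D : ι → Set E} (hlam : Laminar D) (g : κ → ι) :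
    Laminar (D ∘ g) :=
  fun a b => hlam (g a) (g b)

section Laminar

variable {ι E : Type*} [MeasurableSpace E] {D : ι → Set E} {ρ₁ ρ₂ : Measure E}

lemma Laminar.measure_biUnion_finset_le (hlam : Laminar D) (hD : ∀ i, MeasurableSet (D i))
    (h : ∀ i, ρ₁ (D i) ≤ ρ₂ (D i)) (F : Finset ι) :
    ρ₁ (⋃ i ∈ F, D i) ≤ ρ₂ (⋃ i ∈ F, D i) := by
  classical
  induction F using Finset.strongInduction with
  | _ F ih =>
  rcases F.eq_empty_or_nonempty with rfl | hne
  · simp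
  -- a maximal member contains every member it meets, so it splits off disjointly
  obtain ⟨m, hmF, hmax⟩ := F.exists_maximalFor D hne
  set F' := F.filter fun i => ¬ D i ⊆ D m
  have hF' : F' ⊂ F := Finset.filter_ssubset.mpr ⟨m, hmF, fun h => h subset_rfl⟩
  have hunion : ⋃ i ∈ F, D i = D m ∪ ⋃ i ∈ F', D i := by
    refine (union_subset (subset_biUnion_of_mem hmF)
      (biUnion_subset_biUnion_left (Finset.filter_subset _ F))).antisymm' ?_
    refine iUnion₂_subset fun i hi => ?_
    by_cases him : D i ⊆ D m
    · exact him.trans subset_union_left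
    · exact (subset_biUnion_of_mem (u := D) (Finset.mem_filter.mpr ⟨hi, him⟩)).trans
        subset_union_right
  have hdisj : Disjoint (D m) (⋃ i ∈ F', D i) := by
    refine disjoint_iUnion₂_right.mpr fun i hi => ?_
    obtain ⟨hiF, him⟩ := Finset.mem_filter.mp hi
    rcases hlam m i with hmi | him' | hdisj
    · exact absurd (hmax hiF hmi) him
    · exact absurd him' him
    · exact hdisj
  have hmeas : MeasurableSet (⋃ i ∈ F', D i) := F'.measurableSet_biUnion fun i _ => hD i
  rw [hunion, measure_union hdisj hmeas, measure_union hdisj hmeas]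
  exact add_le_add (h m) (ih F' hF')

lemma Laminar.measure_iUnion_le [Countable ι] (hlam : Laminar D)
    (hD : ∀ i, MeasurableSet (D i)) (h : ∀ i, ρ₁ (D i) ≤ ρ₂ (D i)) :
    ρ₁ (⋃ i, D i) ≤ ρ₂ (⋃ i, D i) := by
  have hmono : Monotone fun F : Finset ι => ⋃ i ∈ F, D i := fun F G hFG =>
    biUnion_subset_biUnion_left hFG
  rw [iUnion_eq_iUnion_finset, hmono.measure_iUnion]
  exact iSup_le fun F => (hlam.measure_biUnion_finset_le hD h F).trans
    (measure_mono (subset_iUnion (fun F : Finset ι => ⋃ i ∈ F, D i) F))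

end Laminar

section DyadicMaximal

variable {E : Type} [MeasurableSpace E] {D : ℕ → Set E} {ν : Measure E} {f : E → ℝ≥0∞}

lemma dyadicMaximal_eq_iSup_indicator (x : E) :
    dyadicMaximal D ν f x =
      ⨆ i, (D i).indicator (fun _ => (ν (D i))⁻¹ * ∫⁻ y in D i, f y ∂ν) x := by
  classical
  simp only [dyadicMaximal, indicator_apply, iSup_eq_if]
  rfl

lemma measurable_dyadicMaximal (hD : ∀ i, MeasurableSet (D i)) :
    Measurable (dyadicMaximal D ν f) := by
  simp_rw [funext dyadicMaximal_eq_iSup_indicator]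
  exact .iSup fun i => measurable_const.indicator (hD i)

lemma mul_measure_le_setLIntegral_of_lt_average {s : Set E} {t : ℝ≥0∞}
    (ht : t < (ν s)⁻¹ * ∫⁻ y in s, f y ∂ν) : t * ν s ≤ ∫⁻ y in s, f y ∂ν :=
  calc t * ν s ≤ (ν s)⁻¹ * (∫⁻ y in s, f y ∂ν) * ν s := by gcongr
    _ = (∫⁻ y in s, f y ∂ν) * ((ν s)⁻¹ * ν s) := by ring
    _ ≤ ∫⁻ y in s, f y ∂ν := mul_le_of_le_one_right' (ENNReal.inv_mul_le_one _)

theorem mul_measure_lt_dyadicMaximal_le (hD : ∀ i, MeasurableSet (D i)) (hlam : Laminar D)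
    (t : ℝ≥0∞) :
    t * ν {x | t < dyadicMaximal D ν f x} ≤ ∫⁻ x in {x | t < dyadicMaximal D ν f x}, f x ∂ν := by
  set S := {i | t < (ν (D i))⁻¹ * ∫⁻ y in D i, f y ∂ν}
  have hlevel : {x | t < dyadicMaximal D ν f x} = ⋃ i : S, D i := by
    ext x
    simp [dyadicMaximal, lt_iSup_iff, S, and_comm]
  have hmeas : MeasurableSet (⋃ i : S, D i) := .iUnion fun i => hD i
  have := (hlam.comp ((↑) : S → ℕ)).measure_iUnion_le
    (ρ₁ := t • ν) (ρ₂ := ν.withDensity f) (fun i => hD i)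
    (fun i : S => by simpa [withDensity_apply _ (hD i)] using
      mul_measure_le_setLIntegral_of_lt_average i.2)
  rw [hlevel, ← withDensity_apply _ hmeas]
  simpa using this

lemma lintegral_dyadicMaximal_sq_le_tsum (hD : ∀ i, MeasurableSet (D i)) (hf : Measurable f) :
    ∫⁻ x, dyadicMaximal D ν f x ^ 2 ∂ν ≤ ∑' i, ∫⁻ x in D i, f x ^ 2 ∂ν := by
  set a : ℕ → ℝ≥0∞ := fun i => (ν (D i))⁻¹ * ∫⁻ y in D i, f y ∂ν
  calc ∫⁻ x, dyadicMaximal D ν f x ^ 2 ∂ν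
      ≤ ∫⁻ x, ∑' i, (D i).indicator (fun _ => a i ^ 2) x ∂ν := by
        refine lintegral_mono fun x => ?_
        rw [dyadicMaximal, ENNReal.iSup₂_pow_of_ne_zero _ two_ne_zero]
        refine iSup₂_le fun i hx => ?_
        rw [← indicator_of_mem hx fun _ => a i ^ 2]
        exact ENNReal.le_tsum i
    _ = ∑' i, a i ^ 2 * ν (D i) := by
        rw [lintegral_tsum fun i => (measurable_const.indicator (hD i)).aemeasurable]
        simp_rw [lintegral_indicator_const (hD _)]
    _ ≤ ∑' i, ∫⁻ x in D i, f x ^ 2 ∂ν :=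
        ENNReal.tsum_le_tsum fun i => sq_setAverage_mul_measure_le _ hf.aemeasurable

end DyadicMaximal

def truncFamily {E : Type*} (D : ℕ → Set E) (n : ℕ) (i : ℕ) : Set E :=
  if i < n then D i else ∅

lemma Laminar.truncFamily {E : Type*} {D : ℕ → Set E} (hlam : Laminar D) (n : ℕ) :
    Laminar (truncFamily D n) := by
  intro i j
  unfold _root_.truncFamily
  split_ifs <;> simp [hlam i j]

section Truncation

variable {E : Type} [MeasurableSpace E] {D : ℕ → Set E} {ν : Measure E} {f : E → ℝ≥0∞}

lemma measurableSet_truncFamily (hD : ∀ i, MeasurableSet (D i)) (n i : ℕ) :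
    MeasurableSet (truncFamily D n i) := by
  unfold truncFamily
  split_ifs
  exacts [hD i, .empty]

lemma dyadicMaximal_truncFamily (n : ℕ) (x : E) :
    dyadicMaximal (truncFamily D n) ν f x =
      ⨆ (i : ℕ) (_ : i < n) (_ : x ∈ D i), (ν (D i))⁻¹ * ∫⁻ y in D i, f y ∂ν := by
  refine iSup_congr fun i => ?_
  by_cases hi : i < n <;> simp [truncFamily, hi]

lemma monotone_dyadicMaximal_truncFamily (x : E) :
    Monotone fun n => dyadicMaximal (truncFamily D n) ν f x := fun m n hmn => by
  simp only [dyadicMaximal_truncFamily]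
  exact iSup_mono fun i => iSup_mono' fun hi => ⟨hi.trans_le hmn, le_rfl⟩

lemma iSup_dyadicMaximal_truncFamily (x : E) :
    ⨆ n, dyadicMaximal (truncFamily D n) ν f x = dyadicMaximal D ν f x := by
  simp only [dyadicMaximal_truncFamily]
  rw [iSup_comm]
  refine iSup_congr fun i => le_antisymm (iSup₂_le fun n _ => le_rfl) ?_
  exact le_iSup₂_of_le (i + 1) i.lt_succ_self le_rfl

lemma lintegral_dyadicMaximal_truncFamily_sq_ne_top (hD : ∀ i, MeasurableSet (D i))
    (hf : Measurable f) (hf2 : ∫⁻ x, f x ^ 2 ∂ν ≠ ∞) (n : ℕ) :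
    ∫⁻ x, dyadicMaximal (truncFamily D n) ν f x ^ 2 ∂ν ≠ ∞ := by
  refine ne_top_of_le_ne_top ?_ (lintegral_dyadicMaximal_sq_le_tsum
    (measurableSet_truncFamily hD n) hf)
  rw [tsum_eq_sum (s := Finset.range n) fun i hi => by
    simp [truncFamily, Finset.mem_range.not.mp hi]]
  exact ENNReal.sum_ne_top.mpr fun i _ =>
    ne_top_of_le_ne_top hf2 (setLIntegral_le_lintegral _ _)

end Truncation

theorem lintegral_dyadicMaximal_sq_le {E : Type} [MeasurableSpace E] {D : ℕ → Set E}
    (hD : ∀ i, MeasurableSet (D i)) (hlam : Laminar D) (ν : Measure E) {f : E → ℝ≥0∞}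
    (hf : Measurable f) :
    ∫⁻ x, dyadicMaximal D ν f x ^ 2 ∂ν ≤ 4 * ∫⁻ x, f x ^ 2 ∂ν := by
  rcases eq_or_ne (∫⁻ x, f x ^ 2 ∂ν) ∞ with hf2 | hf2
  · simp [hf2]
  have htrunc (n : ℕ) : ∫⁻ x, dyadicMaximal (truncFamily D n) ν f x ^ 2 ∂ν ≤
      4 * ∫⁻ x, f x ^ 2 ∂ν :=
    lintegral_sq_le_four_mul_of_weakType hf
      (measurable_dyadicMaximal (measurableSet_truncFamily hD n))
      (lintegral_dyadicMaximal_truncFamily_sq_ne_top hD hf hf2 n)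
      (mul_measure_lt_dyadicMaximal_le (measurableSet_truncFamily hD n) (hlam.truncFamily n))
  calc ∫⁻ x, dyadicMaximal D ν f x ^ 2 ∂ν
      = ∫⁻ x, ⨆ n, dyadicMaximal (truncFamily D n) ν f x ^ 2 ∂ν := by
        refine lintegral_congr fun x => ?_
        rw [← iSup_dyadicMaximal_truncFamily, ENNReal.iSup_pow]
    _ = ⨆ n, ∫⁻ x, dyadicMaximal (truncFamily D n) ν f x ^ 2 ∂ν :=
        lintegral_iSup
          (fun n => (measurable_dyadicMaximal (measurableSet_truncFamily hD n)).pow_const 2)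
          fun m n hmn x => pow_le_pow_left' (monotone_dyadicMaximal_truncFamily x hmn) 2
    _ ≤ 4 * ∫⁻ x, f x ^ 2 ∂ν := iSup_le htrunc

lemma lintegral_sq_mul_inv_withDensity {α : Type*} [MeasurableSpace α] (μ : Measure α)
    {w g : α → ℝ≥0∞} (hw : Measurable w) (hw0 : ∀ x, w x ≠ 0) (hwtop : ∀ x, w x ≠ ∞)
    (hg : Measurable g) :
    ∫⁻ x, (g x * (w x)⁻¹) ^ 2 ∂μ.withDensity w =
      ∫⁻ x, g x ^ 2 ∂μ.withDensity fun x => (w x)⁻¹ := by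
  rw [lintegral_withDensity_eq_lintegral_mul _ hw
      (by fun_prop : Measurable fun x => (g x * (w x)⁻¹) ^ 2),
    lintegral_withDensity_eq_lintegral_mul _ (f := fun x => (w x)⁻¹) hw.inv (hg.pow_const 2)]
  refine lintegral_congr fun x => ?_
  calc w x * (g x * (w x)⁻¹) ^ 2 = (w x * (w x)⁻¹) * ((w x)⁻¹ * g x ^ 2) := by ring
    _ = (w x)⁻¹ * g x ^ 2 := by rw [ENNReal.mul_inv_cancel (hw0 x) (hwtop x), one_mul]

theorem lintegral_sq_iterated_dyadicMaximal_le {E : Type} [MeasurableSpace E] {D : ℕ → Set E}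
    (hD : ∀ i, MeasurableSet (D i)) (hlam : Laminar D) (μ : Measure E) {w f : E → ℝ≥0∞}
    (hw : Measurable w) (hw0 : ∀ x, w x ≠ 0) (hwtop : ∀ x, w x ≠ ∞) (hf : Measurable f) :
    ∫⁻ x, dyadicMaximal D (μ.withDensity w)
        (fun y => dyadicMaximal D (μ.withDensity fun z => (w z)⁻¹)
          (fun z => f z * w z) y * (w y)⁻¹) x ^ 2 ∂μ.withDensity w ≤
      16 * ∫⁻ x, f x ^ 2 ∂μ.withDensity w := by
  set M := dyadicMaximal D (μ.withDensity fun z => (w z)⁻¹) fun z => f z * w z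
  have hM : Measurable M := measurable_dyadicMaximal hD
  have hinv := lintegral_sq_mul_inv_withDensity μ (w := fun x => (w x)⁻¹) hw.inv
    (by simpa using hwtop) (by simpa using hw0) hf
  simp only [inv_inv] at hinv
  calc _ ≤ 4 * ∫⁻ x, (M x * (w x)⁻¹) ^ 2 ∂μ.withDensity w :=
        lintegral_dyadicMaximal_sq_le hD hlam _ (hM.mul hw.inv)
    _ = 4 * ∫⁻ x, M x ^ 2 ∂μ.withDensity fun x => (w x)⁻¹ := by
        rw [lintegral_sq_mul_inv_withDensity μ hw hw0 hwtop hM]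
    _ ≤ 4 * (4 * ∫⁻ x, (f x * w x) ^ 2 ∂μ.withDensity fun x => (w x)⁻¹) := by
        gcongr
        exact lintegral_dyadicMaximal_sq_le hD hlam _ (f := fun x => f x * w x) (hf.mul hw)
    _ = 16 * ∫⁻ x, f x ^ 2 ∂μ.withDensity w := by
        rw [hinv, ← mul_assoc]
        norm_num

/-- (i) For any measure `ν`, the dyadic maximal operator is bounded
on `L₂(ν)` with norm at most `2` (squared form: constant `4`). (ii) Consequently, the
iterated operator `f ↦ M^{w dμ}(M^{w⁻¹ dμ}(f·w)·w⁻¹)` is bounded on `L₂(w dμ)` with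
norm at most `4`, so any operator `N` with the pointwise bound
`N f ≤ [w]_{A₂} · M^{w dμ}(M^{w⁻¹ dμ}(f w) w⁻¹)` has `‖N‖_{L₂(wdμ)→L₂(wdμ)} ≤ 4 [w]_{A₂}`
(squared form: constant `16 [w]²`). -/
theorem statement16 {E : Type} [MeasurableSpace E]
    (D : ℕ → Set E) (hDmeas : ∀ i, MeasurableSet (D i))
    (hDnested : ∀ i j, D i ⊆ D j ∨ D j ⊆ D i ∨ Disjoint (D i) (D j)) :
    (∀ (ν : Measure E) (f : E → ℝ≥0∞), Measurable f →
      ∫⁻ x, (dyadicMaximal D ν f x) ^ 2 ∂ν ≤ 4 * ∫⁻ x, (f x) ^ 2 ∂ν) ∧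
    (∀ (μ : Measure E) (w : E → ℝ≥0∞), Measurable w → (∀ x, 0 < w x ∧ w x < ⊤) →
      ∀ (W : ℝ≥0∞) (f : E → ℝ≥0∞), Measurable f →
      ∀ Nf : E → ℝ≥0∞,
        (∀ x, Nf x ≤ W * dyadicMaximal D (μ.withDensity w)
            (fun y => dyadicMaximal D (μ.withDensity fun z => (w z)⁻¹)
              (fun z => f z * w z) y * (w y)⁻¹) x) →
        ∫⁻ x, (Nf x) ^ 2 * w x ∂μ ≤ 16 * W ^ 2 * ∫⁻ x, (f x) ^ 2 * w x ∂μ) := by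
  refine ⟨fun ν f hf => lintegral_dyadicMaximal_sq_le hDmeas hDnested ν hf,
    fun μ w hw hwpos W f hf Nf hNf => ?_⟩
  set M := dyadicMaximal D (μ.withDensity w) fun y =>
    dyadicMaximal D (μ.withDensity fun z => (w z)⁻¹) (fun z => f z * w z) y * (w y)⁻¹
  have hwith (g : E → ℝ≥0∞) : ∫⁻ x, g x * w x ∂μ = ∫⁻ x, g x ∂μ.withDensity w := by
    rw [lintegral_withDensity_eq_lintegral_mul_non_measurable _ hw
      (ae_of_all _ fun x => (hwpos x).2)]
    exact lintegral_congr fun x => mul_comm _ _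
  calc ∫⁻ x, Nf x ^ 2 * w x ∂μ = ∫⁻ x, Nf x ^ 2 ∂μ.withDensity w := hwith _
    _ ≤ ∫⁻ x, (W * M x) ^ 2 ∂μ.withDensity w := lintegral_mono fun x => pow_le_pow_left' (hNf x) 2
    _ = W ^ 2 * ∫⁻ x, M x ^ 2 ∂μ.withDensity w := by
        simp_rw [mul_pow]
        exact lintegral_const_mul _ ((measurable_dyadicMaximal hDmeas).pow_const 2)
    _ ≤ W ^ 2 * (16 * ∫⁻ x, f x ^ 2 ∂μ.withDensity w) := by
        gcongr
        exact lintegral_sq_iterated_dyadicMaximal_le hDmeas hDnested μ hw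
          (fun x => (hwpos x).1.ne') (fun x => (hwpos x).2.ne) hf
    _ = 16 * W ^ 2 * ∫⁻ x, f x ^ 2 * w x ∂μ := by
        rw [hwith]
        ring
end
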